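/- arXiv:1105.3502 — 8 statements merged into one kernel-verified Lean document; each statement's English description precedes it below -/
import Mathlib

section
/- For every n > 1 and every α > 0, the function v_α(x) = [ 2(n+1) / ( (2^n (n+1) α^{1−n})^{1/(n+1)} + (n−1) x )^2 ]^{1/(n−1)} is positive on [0,∞), satisfies v_α''(x) = v_α(x)^n for all x > 0, satisfies the flux boundary condition v_α'(0) = −α, and satisfies v_α(x) → 0 as x → ∞. -/
/-!
The power-law ansatz `v = C y ^ (-p)` with `y = b + (n - 1) x` turns `v'' = v ^ n` into
`p = 2 / (n - 1)` and `C ^ (n - 1) = 2 (n + 1)`, for every shift `b`. Then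
`v'(0) = -2 C b ^ (-(n + 1) / (n - 1))`, and the flux condition `v'(0) = -α` amounts to
`b ^ (n + 1) = 2 ^ n (n + 1) α ^ (1 - n)`. The formula for `v_α` is this profile wherever
`y > 0`, in particular on a neighbourhood of `[0, ∞)`, and it decays because `p > 0`.
-/

open Real Filter Topology

theorem eventually_pos_affine {b k x : ℝ} (hx : 0 < b + k * x) :
    ∀ᶠ z in 𝓝 x, 0 < b + k * z :=
  continuousAt_const.eventually_lt (by fun_prop) hx

theorem hasDerivAt_const_mul_affine_rpow {c b k q x : ℝ} (hx : 0 < b + k * x) :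
    HasDerivAt (fun z => c * (b + k * z) ^ q) (c * q * k * (b + k * x) ^ (q - 1)) x := by
  have h_affine : HasDerivAt (fun z => b + k * z) k x := by
    simpa using ((hasDerivAt_id x).const_mul k).const_add b
  exact ((h_affine.rpow_const (Or.inl hx.ne')).const_mul c).congr_deriv (by ring)

theorem deriv_deriv_const_mul_affine_rpow {c b k q x : ℝ} (hx : 0 < b + k * x) :
    deriv (deriv fun z => c * (b + k * z) ^ q) x =
      c * q * (q - 1) * k ^ 2 * (b + k * x) ^ (q - 2) := by
  have h_deriv : deriv (fun z => c * (b + k * z) ^ q) =ᶠ[𝓝 x]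
      fun z => c * q * k * (b + k * z) ^ (q - 1) :=
    (eventually_pos_affine hx).mono fun z hz => (hasDerivAt_const_mul_affine_rpow hz).deriv
  rw [h_deriv.deriv_eq, (hasDerivAt_const_mul_affine_rpow hx).deriv, sub_sub,
    one_add_one_eq_two]
  ring

theorem div_sq_rpow {a y : ℝ} (ha : 0 ≤ a) (hy : 0 < y) (r : ℝ) :
    (a / y ^ 2) ^ r = a ^ r * y ^ (-(2 * r)) := by
  rw [div_rpow ha (by positivity), ← rpow_natCast, ← rpow_mul hy.le, rpow_neg hy.le,
    div_eq_mul_inv, Nat.cast_ofNat]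

theorem rpow_one_div_sub_one_rpow {a n : ℝ} (ha : 0 < a) (hn : n ≠ 1) :
    (a ^ (1 / (n - 1))) ^ n = a * a ^ (1 / (n - 1)) := by
  have : n - 1 ≠ 0 := sub_ne_zero.mpr hn
  rw [← rpow_mul ha.le, show 1 / (n - 1) * n = 1 + 1 / (n - 1) by field_simp; ring,
    rpow_add ha, rpow_one]

noncomputable def powerProfile (n b : ℝ) : ℝ → ℝ := fun x =>
  (2 * (n + 1)) ^ (1 / (n - 1)) * (b + (n - 1) * x) ^ (-(2 / (n - 1)))

section powerProfile

variable {n b x : ℝ}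

theorem powerProfile_pos (hn : -1 < n) (hx : 0 < b + (n - 1) * x) :
    0 < powerProfile n b x :=
  mul_pos (rpow_pos_of_pos (by linarith) _) (rpow_pos_of_pos hx _)

theorem deriv_deriv_powerProfile (hn : -1 < n) (hn₁ : n ≠ 1) (hx : 0 < b + (n - 1) * x) :
    deriv (deriv (powerProfile n b)) x = powerProfile n b x ^ n := by
  have hm : n - 1 ≠ 0 := sub_ne_zero.mpr hn₁
  have ha : (0 : ℝ) < 2 * (n + 1) := by linarith
  unfold powerProfile
  rw [deriv_deriv_const_mul_affine_rpow hx, mul_rpow (rpow_nonneg ha.le _)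
    (rpow_nonneg hx.le _), rpow_one_div_sub_one_rpow ha hn₁, ← rpow_mul hx.le]
  have h_exp : -(2 / (n - 1)) - 2 = -(2 / (n - 1)) * n := by field_simp; ring
  have h_coeff : -(2 / (n - 1)) * (-(2 / (n - 1)) - 1) * (n - 1) ^ 2 = 2 * (n + 1) := by
    field_simp; ring
  rw [h_exp, ← h_coeff]
  ring

theorem deriv_powerProfile (hn₁ : n ≠ 1) (hx : 0 < b + (n - 1) * x) :
    deriv (powerProfile n b) x =
      -2 * (2 * (n + 1)) ^ (1 / (n - 1)) * (b + (n - 1) * x) ^ (-(2 / (n - 1)) - 1) := by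
  have hm : n - 1 ≠ 0 := sub_ne_zero.mpr hn₁
  unfold powerProfile
  rw [(hasDerivAt_const_mul_affine_rpow hx).deriv]
  field_simp

theorem tendsto_powerProfile_atTop (hn : 1 < n) (b : ℝ) :
    Tendsto (powerProfile n b) atTop (𝓝 0) := by
  have h_base : Tendsto (fun x => b + (n - 1) * x) atTop atTop :=
    tendsto_atTop_add_const_left _ _ (tendsto_id.const_mul_atTop (by linarith))
  unfold powerProfile
  have h_decay := (tendsto_rpow_neg_atTop (by positivity : 0 < 2 / (n - 1))).comp h_base
  simpa only [mul_zero, Function.comp_apply] using h_decay.const_mul ((2 * (n + 1)) ^ (1 / (n - 1)))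

theorem deriv_powerProfile_zero {α : ℝ} (hn : -1 < n) (hn₁ : n ≠ 1) (hα : 0 < α) :
    deriv (powerProfile n (((2 : ℝ) ^ n * (n + 1) * α ^ (1 - n)) ^ (1 / (n + 1)))) 0 = -α := by
  have hm : n - 1 ≠ 0 := sub_ne_zero.mpr hn₁
  have hn₀ : 0 < n + 1 := by linarith
  have hM : 0 < (2 : ℝ) ^ n * (n + 1) * α ^ (1 - n) := by positivity
  have hb : 0 < ((2 : ℝ) ^ n * (n + 1) * α ^ (1 - n)) ^ (1 / (n + 1)) := by positivity
  have h_ratio : 2 * (n + 1) / ((2 : ℝ) ^ n * (n + 1) * α ^ (1 - n)) = (α / 2) ^ (n - 1) := by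
    have h2 : (2 : ℝ) ^ n = 2 * 2 ^ (n - 1) := by rw [rpow_sub two_pos, rpow_one]; ring
    rw [h2, show 1 - n = -(n - 1) by ring, rpow_neg hα.le, div_rpow hα.le zero_le_two]
    field_simp
  -- `C b ^ (-(n + 1) / (n - 1)) = (2 (n + 1) / b ^ (n + 1)) ^ (1 / (n - 1)) = α / 2`
  rw [deriv_powerProfile hn₁ (by simpa using hb), mul_zero, add_zero, ← rpow_mul hM.le,
    show 1 / (n + 1) * (-(2 / (n - 1)) - 1) = -(1 / (n - 1)) by field_simp; ring,
    rpow_neg hM.le, mul_assoc, ← div_eq_mul_inv, ← div_rpow (by linarith) hM.le, h_ratio,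
    one_div, rpow_rpow_inv (by positivity) hm]
  ring

end powerProfile

/-- The explicit steady state `v_α` of the dimensionless morphogen model
`v'' = v^n` on `(0,∞)` with `v'(0) = -α` and `v(∞) = 0`: it is positive on
`[0,∞)`, satisfies the ODE for `x > 0`, the flux condition at `0`, and decays
at infinity. -/
theorem steady_state_properties (n α : ℝ) (hn : 1 < n) (hα : 0 < α)
    (v : ℝ → ℝ)
    (hv : v = fun x : ℝ =>
      (2 * (n + 1) /
        (((2:ℝ) ^ n * (n + 1) * α ^ (1 - n)) ^ (1 / (n + 1)) + (n - 1) * x) ^ 2)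
        ^ (1 / (n - 1))) :
    (∀ x : ℝ, 0 ≤ x → 0 < v x) ∧
    (∀ x : ℝ, 0 < x → deriv (deriv v) x = v x ^ n) ∧
    deriv v 0 = -α ∧
    Tendsto v atTop (nhds 0) := by
  have hn₀ : -1 < n := by linarith
  set b := ((2 : ℝ) ^ n * (n + 1) * α ^ (1 - n)) ^ (1 / (n + 1))
  have hn_add : 0 < n + 1 := by linarith
  have hb : 0 < b := by positivity
  have h_base : ∀ x, 0 ≤ x → 0 < b + (n - 1) * x := fun x hx =>
    add_pos_of_pos_of_nonneg hb (mul_nonneg (by linarith) hx)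
  have hv_eq : ∀ x, 0 < b + (n - 1) * x → v x = powerProfile n b x := fun x hx => by
    simp only [hv]
    rw [div_sq_rpow (by linarith) hx, mul_one_div]
    rfl
  have hv_near : ∀ x, 0 ≤ x → v =ᶠ[𝓝 x] powerProfile n b := fun x hx =>
    (eventually_pos_affine (h_base x hx)).mono fun z hz => hv_eq z hz
  refine ⟨fun x hx => ?_, fun x hx => ?_, ?_, ?_⟩
  · rw [hv_eq x (h_base x hx)]
    exact powerProfile_pos hn₀ (h_base x hx)
  · rw [(hv_near x hx.le).deriv.deriv_eq, hv_eq x (h_base x hx.le)]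
    exact deriv_deriv_powerProfile hn₀ hn.ne' (h_base x hx.le)
  · rw [(hv_near 0 le_rfl).deriv_eq]
    exact deriv_powerProfile_zero hn₀ hn.ne' hα
  · refine (tendsto_powerProfile_atTop hn b).congr' ?_
    filter_upwards [eventually_ge_atTop 0] with x hx
    exact (hv_eq x (h_base x hx)).symm
end

section
/- Let n > 1 and let ρ(ζ) = exp( e^{2ζ}/4 − ((n+3)/(n−1)) ζ ) and dμ = ρ(ζ) dζ. Then there exists R₀ ∈ ℝ such that for every R ≥ R₀ and every continuously differentiable function w : ℝ → ℝ with ∫_ℝ (w² + (w')²) dμ < ∞, one has the weighted Poincaré inequality ∫_R^∞ w(ζ)² dμ(ζ) ≤ 2 e^{−2R} ∫_R^∞ w'(ζ)² dμ(ζ). -/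
/-!
Write `ρ = exp φ`. On `[R, ∞)` one has `φ' = e^{2ζ}/2 - c ≥ λ := e^{2R}/4` once `e^{2R} ≥ 4|c|`,
so `(w² ρ)' = 2 w w' ρ + φ' w² ρ ≥ (λ/2) w² ρ - (2/λ) w'² ρ` by AM-GM. Integrating over `[R, b]`
and letting `b → ∞` along points where the integrable function `w² ρ` is small kills the boundary
term, giving `∫_R^∞ w² ρ ≤ (4/λ²) ∫_R^∞ w'² ρ`; and `4/λ² = 64 e^{-4R} ≤ 2 e^{-2R}` once
`e^{2R} ≥ 32`.
-/

open Real MeasureTheory Filter Set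

lemma integrable_mul_of_integrable_add_mul {α : Type*} [MeasurableSpace α] {μ : Measure α}
    {f g ρ : α → ℝ} (h : Integrable (fun x => (f x + g x) * ρ x) μ)
    (hm : AEStronglyMeasurable (fun x => f x * ρ x) μ) (hf : ∀ x, 0 ≤ f x) (hg : ∀ x, 0 ≤ g x)
    (hρ : ∀ x, 0 ≤ ρ x) : Integrable (fun x => f x * ρ x) μ :=
  h.mono' hm (ae_of_all _ fun x => by
    rw [norm_of_nonneg (mul_nonneg (hf x) (hρ x))]
    exact mul_le_mul_of_nonneg_right (le_add_of_nonneg_right (hg x)) (hρ x))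

lemma frequently_norm_lt_of_integrableOn_Ioi {E : Type*} [NormedAddCommGroup E] {f : ℝ → E}
    {a ε : ℝ} (hf : IntegrableOn f (Ioi a)) (hε : 0 < ε) : ∃ᶠ x in atTop, ‖f x‖ < ε := by
  by_contra! hlarge
  obtain ⟨M, hM⟩ := eventually_atTop.1 hlarge
  have hconst : IntegrableOn (fun _ => ε) (Ioi (max a M)) := by
    refine Integrable.mono (hf.mono_set (Ioi_subset_Ioi (le_max_left a M)))
      aestronglyMeasurable_const ((ae_restrict_iff' measurableSet_Ioi).2 (ae_of_all _ fun x hx => ?_))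
    rw [norm_of_nonneg hε.le]
    exact hM x (max_lt_iff.1 hx).2.le
  rcases (integrableOn_const_iff).1 hconst with h | h
  · simp [hε.ne'] at h
  · simp [Real.volume_Ioi] at h

lemma setIntegral_Ioi_nonpos_of_intervalIntegral_le {g F : ℝ → ℝ} {a : ℝ}
    (hg : IntegrableOn g (Ioi a)) (hF : IntegrableOn F (Ioi a))
    (h : ∀ b ≥ a, ∫ x in a..b, g x ≤ F b) : ∫ x in Ioi a, g x ≤ 0 := by
  by_contra! hpos
  have hbig : ∀ᶠ b in atTop, (∫ x in Ioi a, g x) / 2 < ∫ x in a..b, g x ∧ a ≤ b :=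
    ((intervalIntegral_tendsto_integral_Ioi a hg tendsto_id).eventually
      (lt_mem_nhds (half_lt_self hpos))).and (eventually_ge_atTop a)
  obtain ⟨b, ⟨hgb, hab⟩, hFb⟩ :=
    (hbig.and_frequently (frequently_norm_lt_of_integrableOn_Ioi hF (half_pos hpos))).exists
  linarith [h b hab, le_abs_self (F b), Real.norm_eq_abs (F b)]

theorem setIntegral_sq_mul_le_of_mul_le_deriv {w w' ρ ρ' : ℝ → ℝ} {R l : ℝ} (hl : 0 < l)
    (hw : ∀ x ∈ Ici R, HasDerivAt w (w' x) x) (hρ : ∀ x ∈ Ici R, HasDerivAt ρ (ρ' x) x)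
    (hρ_nonneg : ∀ x ∈ Ici R, 0 ≤ ρ x) (hρ' : ∀ x ∈ Ioi R, l * ρ x ≤ ρ' x)
    (hw_int : IntegrableOn (fun x => w x ^ 2 * ρ x) (Ioi R))
    (hw'_int : IntegrableOn (fun x => w' x ^ 2 * ρ x) (Ioi R)) :
    ∫ x in Ioi R, w x ^ 2 * ρ x ≤ 4 / l ^ 2 * ∫ x in Ioi R, w' x ^ 2 * ρ x := by
  set g : ℝ → ℝ := fun x => l / 2 * (w x ^ 2 * ρ x) - 2 / l * (w' x ^ 2 * ρ x)
  have hg_int : IntegrableOn g (Ioi R) := (hw_int.const_mul _).sub (hw'_int.const_mul _)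
  have hderiv : ∀ x ∈ Ici R,
      HasDerivAt (fun x => w x ^ 2 * ρ x) (2 * w x * w' x * ρ x + w x ^ 2 * ρ' x) x :=
    fun x hx => (((hw x hx).fun_pow 2).mul (hρ x hx)).congr_deriv (by ring)
  have hg_le : ∀ x ∈ Ioi R, g x ≤ 2 * w x * w' x * ρ x + w x ^ 2 * ρ' x := by
    intro x hx
    have hρx := hρ_nonneg x (Ioi_subset_Ici_self hx)
    have hamgm : 0 ≤ l / 2 * (w x ^ 2 * ρ x) + 2 * w x * w' x * ρ x + 2 / l * (w' x ^ 2 * ρ x) :=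
      calc 0 ≤ l / 2 * (w x + 2 / l * w' x) ^ 2 * ρ x := by positivity
        _ = _ := by field_simp; ring
    have hsq : w x ^ 2 * (l * ρ x) ≤ w x ^ 2 * ρ' x :=
      mul_le_mul_of_nonneg_left (hρ' x hx) (sq_nonneg _)
    simp only [g]
    linarith
  have hbound : ∀ b ≥ R, ∫ x in R..b, g x ≤ w b ^ 2 * ρ b := by
    intro b hb
    have hFR : 0 ≤ w R ^ 2 * ρ R := mul_nonneg (sq_nonneg _) (hρ_nonneg R self_mem_Ici)
    have hIcc : IntegrableOn g (Icc R b) :=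
      (integrableOn_Icc_iff_integrableOn_Ioc).2 (hg_int.mono_set Ioc_subset_Ioi_self)
    have := intervalIntegral.integral_le_sub_of_hasDeriv_right_of_le hb
      (fun x hx => (hderiv x hx.1).continuousAt.continuousWithinAt)
      (fun x hx => (hderiv x (Ioi_subset_Ici_self hx.1)).hasDerivWithinAt) hIcc
      (fun x hx => hg_le x hx.1)
    linarith
  have hI := setIntegral_Ioi_nonpos_of_intervalIntegral_le hg_int hw_int hbound
  rw [integral_sub (hw_int.const_mul _) (hw'_int.const_mul _), integral_const_mul,
    integral_const_mul, sub_nonpos] at hI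
  calc ∫ x in Ioi R, w x ^ 2 * ρ x
      = 2 / l * (l / 2 * ∫ x in Ioi R, w x ^ 2 * ρ x) := by field_simp
    _ ≤ 2 / l * (2 / l * ∫ x in Ioi R, w' x ^ 2 * ρ x) := by gcongr
    _ = 4 / l ^ 2 * ∫ x in Ioi R, w' x ^ 2 * ρ x := by ring

noncomputable def doubleExpWeight (c x : ℝ) : ℝ := exp (exp (2 * x) / 4 - c * x)

lemma hasDerivAt_doubleExpWeight (c x : ℝ) :
    HasDerivAt (doubleExpWeight c) ((exp (2 * x) / 2 - c) * doubleExpWeight c x) x := by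
  have hφ : HasDerivAt (fun y => exp (2 * y) / 4 - c * y) (exp (2 * x) / 2 - c) x :=
    ((((hasDerivAt_id' x).const_mul 2).exp.div_const 4).fun_sub
      ((hasDerivAt_id' x).const_mul c)).congr_deriv (by ring)
  exact hφ.exp.congr_deriv (mul_comm _ _)

lemma continuous_doubleExpWeight (c : ℝ) : Continuous (doubleExpWeight c) :=
  continuous_iff_continuousAt.2 fun x => (hasDerivAt_doubleExpWeight c x).continuousAt

lemma doubleExpWeight_pos (c x : ℝ) : 0 < doubleExpWeight c x := exp_pos _

theorem setIntegral_sq_mul_doubleExpWeight_le {c R : ℝ} (hR : log (4 * |c| + 32) / 2 ≤ R)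
    {w w' : ℝ → ℝ} (hw : ∀ x ∈ Ici R, HasDerivAt w (w' x) x)
    (hw_int : IntegrableOn (fun x => w x ^ 2 * doubleExpWeight c x) (Ioi R))
    (hw'_int : IntegrableOn (fun x => w' x ^ 2 * doubleExpWeight c x) (Ioi R)) :
    ∫ x in Ioi R, w x ^ 2 * doubleExpWeight c x ≤
      2 * exp (-2 * R) * ∫ x in Ioi R, w' x ^ 2 * doubleExpWeight c x := by
  set E := exp (2 * R)
  have hE : 4 * |c| + 32 ≤ E := (log_le_iff_le_exp (by positivity)).1 (by linarith)
  have hρ' : ∀ x ∈ Ioi R, E / 4 * doubleExpWeight c x ≤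
      (exp (2 * x) / 2 - c) * doubleExpWeight c x := by
    intro x hx
    have hEx : E ≤ exp (2 * x) := exp_le_exp.2 (by linarith [mem_Ioi.1 hx])
    have hc : c ≤ |c| := le_abs_self c
    exact mul_le_mul_of_nonneg_right (by linarith) (doubleExpWeight_pos c x).le
  have hpoincare := setIntegral_sq_mul_le_of_mul_le_deriv (by positivity) hw
    (fun x _ => hasDerivAt_doubleExpWeight c x) (fun x _ => (doubleExpWeight_pos c x).le) hρ'
    hw_int hw'_int
  have hconst : 4 / (E / 4) ^ 2 ≤ 2 * exp (-2 * R) := by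
    rw [neg_mul, exp_neg, div_pow, div_div_eq_mul_div, div_le_iff₀ (by positivity)]
    field_simp
    nlinarith [abs_nonneg c]
  refine hpoincare.trans (mul_le_mul_of_nonneg_right hconst ?_)
  exact setIntegral_nonneg measurableSet_Ioi fun x _ =>
    mul_nonneg (sq_nonneg _) (doubleExpWeight_pos c x).le

theorem weighted_poincare_general (n : ℝ)
    (ρ : ℝ → ℝ)
    (hρ : ρ = fun ζ : ℝ =>
      Real.exp (Real.exp (2 * ζ) / 4 - (n + 3) / (n - 1) * ζ)) :
    ∃ R₀ : ℝ, ∀ R ≥ R₀, ∀ w : ℝ → ℝ, ContDiff ℝ 1 w →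
      Integrable (fun ζ => (w ζ ^ 2 + deriv w ζ ^ 2) * ρ ζ) →
      ∫ ζ in Set.Ioi R, w ζ ^ 2 * ρ ζ ≤
        2 * Real.exp (-2 * R) * ∫ ζ in Set.Ioi R, deriv w ζ ^ 2 * ρ ζ := by
  set c := (n + 3) / (n - 1)
  obtain rfl : ρ = doubleExpWeight c := hρ
  refine ⟨log (4 * |c| + 32) / 2, fun R hR w hw hint => ?_⟩
  have hρ := continuous_doubleExpWeight c
  have hρ_nonneg : ∀ x, 0 ≤ doubleExpWeight c x := fun x => (doubleExpWeight_pos c x).le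
  have hw_int := integrable_mul_of_integrable_add_mul hint
    ((hw.continuous.pow 2).mul hρ).aestronglyMeasurable (fun _ => sq_nonneg _)
    (fun _ => sq_nonneg _) hρ_nonneg
  have hw'_int := integrable_mul_of_integrable_add_mul (f := fun x => deriv w x ^ 2)
    (by simpa only [add_comm] using hint)
    (((hw.continuous_deriv le_rfl).pow 2).mul hρ).aestronglyMeasurable (fun _ => sq_nonneg _)
    (fun _ => sq_nonneg _) hρ_nonneg
  exact setIntegral_sq_mul_doubleExpWeight_le hR
    (fun x _ => (hw.differentiable one_ne_zero x).hasDerivAt) hw_int.integrableOn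
    hw'_int.integrableOn

/-- Weighted Poincaré inequality: for `R` large enough and any `C¹` function `w` with
`∫ (w² + w'²) dμ < ∞`, one has `∫_R^∞ w² dμ ≤ 2 e^{-2R} ∫_R^∞ (w')² dμ`, where
`dμ = ρ dζ` and `ρ(ζ) = exp(e^{2ζ}/4 - ((n+3)/(n-1)) ζ)`. -/
theorem weighted_poincare (n : ℝ) (hn : 1 < n)
    (ρ : ℝ → ℝ)
    (hρ : ρ = fun ζ : ℝ =>
      Real.exp (Real.exp (2 * ζ) / 4 - (n + 3) / (n - 1) * ζ)) :
    ∃ R₀ : ℝ, ∀ R ≥ R₀, ∀ w : ℝ → ℝ, ContDiff ℝ 1 w →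
      Integrable (fun ζ => (w ζ ^ 2 + deriv w ζ ^ 2) * ρ ζ) →
      ∫ ζ in Set.Ioi R, w ζ ^ 2 * ρ ζ ≤
        2 * Real.exp (-2 * R) * ∫ ζ in Set.Ioi R, deriv w ζ ^ 2 * ρ ζ :=
  weighted_poincare_general n ρ hρ
end

section
/- Let n > 1 and let ρ(ζ) = exp( e^{2ζ}/4 − ((n+3)/(n−1)) ζ ), dμ = ρ dζ. Then there exists R₀ ∈ ℝ such that for every R ≥ R₀ and every continuously differentiable w : ℝ → ℝ with ∫_ℝ (w² + (w')²) dμ < ∞, ∫_R^∞ [ (1/2) w'(ζ)² − ((n+1)/(n−1)²) w(ζ)² ] dμ(ζ) ≥ (1/4) ∫_R^∞ [ w'(ζ)² + w(ζ)² ] dμ(ζ). -/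
open Real MeasureTheory Set Filter Topology

/-! Write `ρ = e^F`. Since `F'(ζ) = e^{2ζ}/2 - (n+3)/(n-1) → ∞`, for `R` large `ρ' ≥ M ρ` on
`[R, ∞)` with `M = 4(n+1)/(n-1)² + 2`. Then `(w²ρ)' = 2ww'ρ + w²ρ' ≥ M w²ρ - (w² + w'²)ρ`;
integrating over `[R, b]` for `b → ∞` along points where `w²ρ(b)` is small (they exist because
`w²ρ` is integrable) gives the weighted Poincaré inequality
`M ∫_R^∞ w²ρ ≤ ∫_R^∞ (w² + w'²)ρ`, and the claim is this inequality rearranged. -/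

lemma frequently_lt_of_integrableOn_Ioi {g : ℝ → ℝ} {a ε : ℝ} (hg : IntegrableOn g (Ioi a))
    (hε : 0 < ε) : ∃ᶠ x in atTop, g x < ε := by
  refine frequently_atTop.2 fun b => ?_
  by_contra! hge
  have hconst : IntegrableOn (fun _ => ε) (Ioi (max a b)) :=
    (hg.mono_set (Ioi_subset_Ioi (le_max_left a b))).mono' aestronglyMeasurable_const
      (ae_restrict_of_forall_mem measurableSet_Ioi fun x hx => by
        rw [norm_of_nonneg hε.le]
        exact hge x ((le_max_right a b).trans (Ioi_subset_Ici_self hx)))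
  simp [integrableOn_const_iff, hε.ne'] at hconst

lemma integrableOn_sq_mul_of_add_sq_mul {s : Set ℝ} {u v ρ : ℝ → ℝ}
    (h : IntegrableOn (fun x => (u x ^ 2 + v x ^ 2) * ρ x) s) (hs : MeasurableSet s)
    (hρ : ∀ x ∈ s, 0 ≤ ρ x)
    (hu : AEStronglyMeasurable (fun x => u x ^ 2 * ρ x) (volume.restrict s)) :
    IntegrableOn (fun x => u x ^ 2 * ρ x) s :=
  h.mono' hu (ae_restrict_of_forall_mem hs fun x hx => by
    have := hρ x hx
    rw [norm_of_nonneg (by positivity)]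
    nlinarith [sq_nonneg (v x)])

section WeightedPoincare

variable {ρ ρ' w w' : ℝ → ℝ} {R M : ℝ}

lemma mul_intervalIntegral_sq_mul_le {b : ℝ} (hRb : R ≤ b)
    (hρ : ∀ x ∈ Icc R b, HasDerivAt ρ (ρ' x) x) (hw : ∀ x ∈ Icc R b, HasDerivAt w (w' x) x)
    (hρ_nonneg : ∀ x ∈ Icc R b, 0 ≤ ρ x) (hρ' : ∀ x ∈ Icc R b, M * ρ x ≤ ρ' x)
    (hint : IntegrableOn (fun x => (w x ^ 2 + w' x ^ 2) * ρ x) (Icc R b)) :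
    M * ∫ x in R..b, w x ^ 2 * ρ x ≤
      w b ^ 2 * ρ b - w R ^ 2 * ρ R + ∫ x in R..b, (w x ^ 2 + w' x ^ 2) * ρ x := by
  have hderiv : ∀ x ∈ Icc R b, HasDerivAt (fun x => w x ^ 2 * ρ x)
      (2 * w x * w' x * ρ x + w x ^ 2 * ρ' x) x := fun x hx =>
    (((hw x hx).pow 2).mul (hρ x hx)).congr_deriv (by simp only [Pi.pow_apply]; ring)
  have hcont : ContinuousOn (fun x => w x ^ 2 * ρ x) (Icc R b) := fun x hx =>
    (hderiv x hx).continuousAt.continuousWithinAt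
  have hsq : IntervalIntegrable (fun x => w x ^ 2 * ρ x) volume R b :=
    (intervalIntegrable_iff_integrableOn_Icc_of_le hRb).2 hcont.integrableOn_Icc
  have hftc := intervalIntegral.integral_le_sub_of_hasDeriv_right_of_le
    (φ := fun x => M * (w x ^ 2 * ρ x) - (w x ^ 2 + w' x ^ 2) * ρ x) hRb hcont
    (fun x hx => (hderiv x (Ioo_subset_Icc_self hx)).hasDerivWithinAt)
    (by exact (hcont.integrableOn_Icc.const_mul M).sub hint) fun x hx => by
      have hx' := Ioo_subset_Icc_self hx
      -- `(w + w')² ρ ≥ 0` absorbs the cross term, `w² (ρ' - M ρ) ≥ 0` the growth of the weight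
      nlinarith [mul_nonneg (sq_nonneg (w x + w' x)) (hρ_nonneg x hx'),
        mul_nonneg (sq_nonneg (w x)) (sub_nonneg.2 (hρ' x hx'))]
  rw [intervalIntegral.integral_sub (hsq.const_mul M)
      ((intervalIntegrable_iff_integrableOn_Icc_of_le hRb).2 hint),
    intervalIntegral.integral_const_mul] at hftc
  linarith

theorem weighted_poincare_Ioi
    (hρ : ∀ x ∈ Ici R, HasDerivAt ρ (ρ' x) x) (hw : ∀ x ∈ Ici R, HasDerivAt w (w' x) x)
    (hρ_nonneg : ∀ x ∈ Ici R, 0 ≤ ρ x) (hρ' : ∀ x ∈ Ici R, M * ρ x ≤ ρ' x)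
    (hint : IntegrableOn (fun x => (w x ^ 2 + w' x ^ 2) * ρ x) (Ioi R)) :
    M * ∫ x in Ioi R, w x ^ 2 * ρ x ≤ ∫ x in Ioi R, (w x ^ 2 + w' x ^ 2) * ρ x := by
  have hcont : ContinuousOn (fun x => w x ^ 2 * ρ x) (Ioi R) := fun x hx =>
    have hx : x ∈ Ici R := Ioi_subset_Ici_self hx
    (((hw x hx).continuousAt.pow 2).mul (hρ x hx).continuousAt).continuousWithinAt
  have hsq : IntegrableOn (fun x => w x ^ 2 * ρ x) (Ioi R) :=
    integrableOn_sq_mul_of_add_sq_mul hint measurableSet_Ioi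
      (fun x hx => hρ_nonneg x (Ioi_subset_Ici_self hx))
      (hcont.aestronglyMeasurable measurableSet_Ioi)
  have hbound : ∀ b, R ≤ b →
      ∫ x in R..b, (w x ^ 2 + w' x ^ 2) * ρ x ≤ ∫ x in Ioi R, (w x ^ 2 + w' x ^ 2) * ρ x :=
    fun b hRb => by
      rw [intervalIntegral.integral_of_le hRb]
      exact setIntegral_mono_set hint
        (ae_restrict_of_forall_mem measurableSet_Ioi fun x hx => by
          have := hρ_nonneg x (Ioi_subset_Ici_self hx)
          positivity)
        Ioc_subset_Ioi_self.eventuallyLE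
  refine le_of_forall_pos_le_add fun ε hε => le_of_tendsto_of_frequently
    ((intervalIntegral_tendsto_integral_Ioi R hsq tendsto_id).const_mul M) ?_
  refine ((frequently_lt_of_integrableOn_Ioi hsq hε).and_eventually
    (eventually_ge_atTop R)).mono fun b ⟨hb, hRb⟩ => ?_
  have hRb' : Icc R b ⊆ Ici R := Icc_subset_Ici_self
  have hfin := mul_intervalIntegral_sq_mul_le hRb (fun x hx => hρ x (hRb' hx))
    (fun x hx => hw x (hRb' hx)) (fun x hx => hρ_nonneg x (hRb' hx)) (fun x hx => hρ' x (hRb' hx))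
    ((integrableOn_Icc_iff_integrableOn_Ioc).2 (hint.mono_set Ioc_subset_Ioi_self))
  have hR : 0 ≤ w R ^ 2 * ρ R := by
    have := hρ_nonneg R self_mem_Ici
    positivity
  dsimp only [id]
  linarith [hbound b hRb]

end WeightedPoincare

lemma hasDerivAt_exp_exp_two_mul_div_four_sub_mul (a x : ℝ) :
    HasDerivAt (fun ζ => exp (exp (2 * ζ) / 4 - a * ζ))
      ((exp (2 * x) / 2 - a) * exp (exp (2 * x) / 4 - a * x)) x := by
  have hinner : HasDerivAt (fun ζ => exp (2 * ζ) / 4 - a * ζ) (exp (2 * x) / 2 - a) x :=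
    ((((hasDerivAt_id x).const_mul 2).exp.div_const 4).sub
      ((hasDerivAt_id x).const_mul a)).congr_deriv (by simp only [id]; ring)
  exact hinner.exp.congr_deriv (by ring)

theorem energy_tail_estimate_general (n : ℝ)
    (ρ : ℝ → ℝ)
    (hρ : ρ = fun ζ : ℝ =>
      Real.exp (Real.exp (2 * ζ) / 4 - (n + 3) / (n - 1) * ζ)) :
    ∃ R₀ : ℝ, ∀ R ≥ R₀, ∀ w : ℝ → ℝ, ContDiff ℝ 1 w →
      Integrable (fun ζ => (w ζ ^ 2 + deriv w ζ ^ 2) * ρ ζ) →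
      (1 / 4) * ∫ ζ in Set.Ioi R, (deriv w ζ ^ 2 + w ζ ^ 2) * ρ ζ ≤
        ∫ ζ in Set.Ioi R,
          ((1 / 2) * deriv w ζ ^ 2 - (n + 1) / (n - 1) ^ 2 * w ζ ^ 2) * ρ ζ := by
  set a := (n + 3) / (n - 1)
  set c := (n + 1) / (n - 1) ^ 2
  have hρ_pos : ∀ x, 0 < ρ x := fun x => hρ ▸ exp_pos _
  have hρ_deriv : ∀ x, HasDerivAt ρ ((exp (2 * x) / 2 - a) * ρ x) x := fun x =>
    hρ ▸ hasDerivAt_exp_exp_two_mul_div_four_sub_mul a x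
  have hgrowth : Tendsto (fun x : ℝ => exp (2 * x) / 2 - a) atTop atTop :=
    tendsto_atTop_add_const_right _ (-a)
      ((tendsto_exp_atTop.comp (tendsto_id.const_mul_atTop two_pos)).atTop_div_const two_pos)
  obtain ⟨R₀, hR₀⟩ := eventually_atTop.1 (hgrowth.eventually_ge_atTop (4 * c + 2))
  refine ⟨R₀, fun R hR w hw hint => ?_⟩
  have hpoincare := weighted_poincare_Ioi (M := 4 * c + 2) (fun x _ => hρ_deriv x)
    (fun x _ => ((hw.differentiable one_ne_zero) x).hasDerivAt) (fun x _ => (hρ_pos x).le)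
    (fun x hx => mul_le_mul_of_nonneg_right (hR₀ x (hR.trans hx)) (hρ_pos x).le) hint.integrableOn
  have hsq : IntegrableOn (fun x => w x ^ 2 * ρ x) (Ioi R) :=
    integrableOn_sq_mul_of_add_sq_mul hint.integrableOn measurableSet_Ioi (fun x _ => (hρ_pos x).le)
      ((hw.continuous.pow 2).mul (continuous_iff_continuousAt.2 fun x =>
        (hρ_deriv x).continuousAt)).aestronglyMeasurable
  have hlhs : ∫ ζ in Ioi R, (deriv w ζ ^ 2 + w ζ ^ 2) * ρ ζ =
      ∫ ζ in Ioi R, (w ζ ^ 2 + deriv w ζ ^ 2) * ρ ζ := by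
    simp_rw [add_comm (deriv w _ ^ 2)]
  have hrhs : ∫ ζ in Ioi R, (1 / 2 * deriv w ζ ^ 2 - c * w ζ ^ 2) * ρ ζ =
      1 / 2 * (∫ ζ in Ioi R, (w ζ ^ 2 + deriv w ζ ^ 2) * ρ ζ) -
        (1 / 2 + c) * ∫ ζ in Ioi R, w ζ ^ 2 * ρ ζ := by
    rw [← integral_const_mul, ← integral_const_mul,
      ← integral_sub (hint.integrableOn.const_mul _) (hsq.const_mul _)]
    congr 1 with ζ
    ring
  rw [hlhs, hrhs]
  linarith

/-- Tail estimate for the energy: for `R` large enough and any `C¹` function `w` with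
`∫ (w² + w'²) dμ < ∞`, one has
`∫_R^∞ [ (1/2)(w')² - ((n+1)/(n-1)²) w² ] dμ ≥ (1/4) ∫_R^∞ [ (w')² + w² ] dμ`. -/
theorem energy_tail_estimate (n : ℝ) (hn : 1 < n)
    (ρ : ℝ → ℝ)
    (hρ : ρ = fun ζ : ℝ =>
      Real.exp (Real.exp (2 * ζ) / 4 - (n + 3) / (n - 1) * ζ)) :
    ∃ R₀ : ℝ, ∀ R ≥ R₀, ∀ w : ℝ → ℝ, ContDiff ℝ 1 w →
      Integrable (fun ζ => (w ζ ^ 2 + deriv w ζ ^ 2) * ρ ζ) →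
      (1 / 4) * ∫ ζ in Set.Ioi R, (deriv w ζ ^ 2 + w ζ ^ 2) * ρ ζ ≤
        ∫ ζ in Set.Ioi R,
          ((1 / 2) * deriv w ζ ^ 2 - (n + 1) / (n - 1) ^ 2 * w ζ ^ 2) * ρ ζ :=
  energy_tail_estimate_general n ρ hρ
end

section
/- Let n > 1 and let φ ∈ C²(ℝ) be a classical solution of φ'' + ( e^{2ζ}/2 − (n+3)/(n−1) ) φ' + (2(n+1)/(n−1)²) φ (1 − φ^{n−1}) = 0 on ℝ with 0 < φ(ζ) < 1 for all ζ ∈ ℝ, lim_{ζ→−∞} φ(ζ) = 1 and lim_{ζ→+∞} φ(ζ) = 0. Then φ is strictly decreasing on ℝ; in particular φ'(ζ) < 0 for every ζ, since at any critical point ζ₀ the equation forces φ''(ζ₀) = −(2(n+1)/(n−1)²) φ(ζ₀)(1 − φ(ζ₀)^{n−1}) < 0. -/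
/-!
At a critical point of `φ` the equation gives `φ'' = -(reaction term) < 0`, so `φ'` can only
cross zero downwards. Hence once `φ'` is nonpositive it stays nonpositive. Since `φ → 1 > φ(c)`
at `-∞`, `φ'` cannot be positive on all of `(-∞, c]`, so `φ' ≤ 0` everywhere; a zero of `φ'`
would then be a maximum of `φ'`, contradicting `φ'' < 0` there.
-/

open Real Filter Set Topology

section DerivNegAtZeros

variable {g : ℝ → ℝ}

theorem nonpos_of_le_of_deriv_neg_at_zeros (hg : Continuous g)
    (hzero : ∀ x, g x = 0 → deriv g x < 0) {a b : ℝ} (ha : g a ≤ 0) (hab : a ≤ b) :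
    g b ≤ 0 := by
  have hclosed : IsClosed ({x | g x ≤ 0} ∩ Icc a b) :=
    (isClosed_le hg continuous_const).inter isClosed_Icc
  refine hclosed.Icc_subset_of_forall_mem_nhdsWithin ha (fun x ⟨hx, _⟩ ↦ ?_) ⟨hab, le_rfl⟩
  rcases (show g x ≤ 0 from hx).lt_or_eq with hneg | hgx
  · exact mem_nhdsWithin_of_mem_nhds
      ((hg.continuousAt.eventually (gt_mem_nhds hneg)).mono fun _ h ↦ h.le)
  · have hsign := eventually_nhdsWithin_sign_eq_of_deriv_neg (hzero x hgx) hgx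
    filter_upwards [nhdsWithin_le_nhds hsign, self_mem_nhdsWithin] with y hy (hxy : x < y)
    rw [_root_.sign_neg (sub_neg.mpr hxy), sign_eq_neg_one_iff] at hy
    exact hy.le

theorem neg_of_deriv_neg_at_zeros (hg : Continuous g) (hzero : ∀ x, g x = 0 → deriv g x < 0)
    (hbot : ∀ c, ∃ a ≤ c, g a ≤ 0) (x : ℝ) : g x < 0 := by
  have hnonpos : ∀ y, g y ≤ 0 := fun y ↦
    let ⟨a, hay, ha⟩ := hbot y
    nonpos_of_le_of_deriv_neg_at_zeros hg hzero ha hay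
  refine (hnonpos x).lt_of_ne fun hx ↦ (hzero x hx).ne ?_
  exact IsLocalMax.deriv_eq_zero (Eventually.of_forall fun y ↦ hx ▸ hnonpos y)

end DerivNegAtZeros

theorem exists_le_deriv_nonpos_of_tendsto_atBot {f : ℝ → ℝ} (hf : Differentiable ℝ f) {L : ℝ}
    (hL : Tendsto f atBot (𝓝 L)) {c : ℝ} (hc : f c < L) : ∃ a ≤ c, deriv f a ≤ 0 := by
  by_contra! hpos
  have hmono : MonotoneOn f (Iic c) :=
    monotoneOn_of_deriv_nonneg (convex_Iic c) hf.continuous.continuousOn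
      hf.differentiableOn fun x hx ↦
        (hpos x (interior_subset hx : x ∈ Iic c)).le
  obtain ⟨x, hx, hxc⟩ := ((hL.eventually (eventually_gt_nhds hc)).and
    (eventually_le_atBot c)).exists
  exact (hmono (mem_Iic.mpr hxc) self_mem_Iic hxc).not_gt hx

theorem profile_reaction_pos {n u : ℝ} (hn : 1 < n) (hu₀ : 0 < u) (hu₁ : u < 1) :
    0 < 2 * (n + 1) / (n - 1) ^ 2 * u * (1 - u ^ (n - 1)) := by
  have hpow : u ^ (n - 1) < 1 := Real.rpow_lt_one hu₀.le hu₁ (by linarith)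
  have hcoef : 0 < 2 * (n + 1) / (n - 1) ^ 2 := by
    have : 0 < n - 1 := by linarith
    positivity
  exact mul_pos (mul_pos hcoef hu₀) (sub_pos.mpr hpow)

theorem profile_strictly_decreasing_general (n : ℝ) (hn : 1 < n)
    (φ : ℝ → ℝ) (hreg : ContDiff ℝ 2 φ)
    (hode : ∀ ζ : ℝ, deriv (deriv φ) ζ +
      (Real.exp (2 * ζ) / 2 - (n + 3) / (n - 1)) * deriv φ ζ +
      2 * (n + 1) / (n - 1) ^ 2 * φ ζ * (1 - φ ζ ^ (n - 1)) = 0)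
    (hrange : ∀ ζ : ℝ, 0 < φ ζ ∧ φ ζ < 1)
    (hlim_bot : Tendsto φ atBot (nhds 1)) :
    StrictAnti φ ∧ ∀ ζ : ℝ, deriv φ ζ < 0 := by
  have hcrit : ∀ ζ, deriv φ ζ = 0 → deriv (deriv φ) ζ < 0 := by
    intro ζ hζ
    have h := hode ζ
    rw [hζ, mul_zero, add_zero] at h
    linarith [profile_reaction_pos hn (hrange ζ).1 (hrange ζ).2]
  have hneg : ∀ ζ, deriv φ ζ < 0 :=
    neg_of_deriv_neg_at_zeros (hreg.continuous_deriv (by norm_num)) hcrit fun c ↦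
      exists_le_deriv_nonpos_of_tendsto_atBot (hreg.differentiable (by norm_num)) hlim_bot
        (hrange c).2
  exact ⟨strictAnti_of_deriv_neg hneg, hneg⟩

/-- Monotonicity of the self-similar profile: any classical `C²` solution of the
profile equation in the logarithmic variable with `0 < φ < 1`, `φ(-∞) = 1` and
`φ(+∞) = 0` is strictly decreasing, with `φ' < 0` everywhere. -/
theorem profile_strictly_decreasing (n : ℝ) (hn : 1 < n)
    (φ : ℝ → ℝ) (hreg : ContDiff ℝ 2 φ)
    (hode : ∀ ζ : ℝ, deriv (deriv φ) ζ +
      (Real.exp (2 * ζ) / 2 - (n + 3) / (n - 1)) * deriv φ ζ +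
      2 * (n + 1) / (n - 1) ^ 2 * φ ζ * (1 - φ ζ ^ (n - 1)) = 0)
    (hrange : ∀ ζ : ℝ, 0 < φ ζ ∧ φ ζ < 1)
    (hlim_bot : Tendsto φ atBot (nhds 1))
    (hlim_top : Tendsto φ atTop (nhds 0)) :
    StrictAnti φ ∧ ∀ ζ : ℝ, deriv φ ζ < 0 :=
  profile_strictly_decreasing_general n hn φ hreg hode hrange hlim_bot
end

section
/- Let R ∈ ℝ and let q₀, q₁ : [R,∞) → ℝ be continuous with q₀(ζ) ≥ 1/4 and q₁(ζ) ≥ 0 for all ζ ≥ R, and ∫_R^∞ s q₁(s) ds < ∞. Let ψ₀, ψ₁ : [R,∞) → (0,∞) be C² solutions of ψ₀'' = q₀ ψ₀ and ψ₁'' = (q₀ + q₁) ψ₁ respectively, both tending to 0 as ζ → +∞. Then the ratio ψ₁(ζ)/ψ₀(ζ) converges as ζ → +∞ to a finite positive limit c ∈ (0,∞). -/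
/-!
Positive solutions of `ψ'' = q ψ` with `q ≥ 0` are convex, so when they tend to `0` they
decrease and `ψ' → 0`. The Wronskian `W = ψ₀ ψ₁' - ψ₀' ψ₁` then satisfies `W' = q₁ ψ₀ ψ₁` and
`W → 0`, hence `W(ζ) = -∫_ζ^∞ q₁ ψ₀ ψ₁`, and since `ψ₀ ψ₁` decreases,
`-ψ₀ ψ₁ (ζ) G(ζ) ≤ W(ζ) ≤ 0` with `G(ζ) = ∫_ζ^∞ q₁`. As `(log (ψ₁/ψ₀))' = W / (ψ₀ ψ₁)`, the
logarithm of the ratio is nonincreasing, while `log (ψ₁/ψ₀) - T` is nondecreasing for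
`T(ζ) = ∫_ζ^∞ (s - ζ) q₁(s) ds`, since `T' = -G`. The moment condition makes `T` finite, and
`T ≥ 0`, so `log (ψ₁/ψ₀)` is bounded below and converges.
-/

open Real Filter MeasureTheory

open Set Topology

noncomputable def wronskian (f g : ℝ → ℝ) (x : ℝ) : ℝ := f x * deriv g x - deriv f x * g x

lemma monotoneOn_Ioi_of_hasDerivAt_nonneg {f f' : ℝ → ℝ} {a : ℝ}
    (hf : ∀ x > a, HasDerivAt f (f' x) x) (hf' : ∀ x > a, 0 ≤ f' x) : MonotoneOn f (Ioi a) :=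
  monotoneOn_of_hasDerivWithinAt_nonneg (convex_Ioi a)
    (fun x hx => (hf x hx).continuousAt.continuousWithinAt)
    (fun x hx => (hf x (interior_Ioi.subset hx)).hasDerivWithinAt)
    (fun x hx => hf' x (interior_Ioi.subset hx))

lemma antitoneOn_Ioi_of_hasDerivAt_nonpos {f f' : ℝ → ℝ} {a : ℝ}
    (hf : ∀ x > a, HasDerivAt f (f' x) x) (hf' : ∀ x > a, f' x ≤ 0) : AntitoneOn f (Ioi a) :=
  antitoneOn_of_hasDerivWithinAt_nonpos (convex_Ioi a)
    (fun x hx => (hf x hx).continuousAt.continuousWithinAt)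
    (fun x hx => (hf x (interior_Ioi.subset hx)).hasDerivWithinAt)
    (fun x hx => hf' x (interior_Ioi.subset hx))

lemma AntitoneOn.exists_tendsto_atTop {f : ℝ → ℝ} {a : ℝ} (hf : AntitoneOn f (Ici a))
    (hbdd : BddBelow (f '' Ici a)) : ∃ L, Tendsto f atTop (𝓝 L) := by
  have hanti : Antitone fun x => f (max x a) := fun x y hxy =>
    hf (le_max_right x a) (le_max_right y a) (max_le_max hxy le_rfl)
  have hbdd' : BddBelow (range fun x => f (max x a)) :=
    hbdd.mono (range_subset_iff.2 fun x => mem_image_of_mem f (le_max_right x a))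
  refine ⟨_, (tendsto_atTop_ciInf hanti hbdd').congr' ?_⟩
  filter_upwards [eventually_ge_atTop a] with x hx
  rw [max_eq_left hx]

section ConvexDecay

variable {R L : ℝ} {ψ : ℝ → ℝ}

lemma convexOn_Ici_of_deriv_deriv_eq_mul {q : ℝ → ℝ} (hψ : ContDiff ℝ 2 ψ)
    (hq : ∀ x ≥ R, 0 ≤ q x) (hpos : ∀ x ≥ R, 0 < ψ x)
    (hode : ∀ x ≥ R, deriv (deriv ψ) x = q x * ψ x) : ConvexOn ℝ (Ici R) ψ :=
  convexOn_of_deriv2_nonneg (convex_Ici R) hψ.continuous.continuousOn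
    (hψ.differentiable two_ne_zero).differentiableOn hψ.differentiable_deriv_two.differentiableOn
    fun x hx => by
      have hx : R ≤ x := interior_subset hx
      simpa [hode x hx] using mul_nonneg (hq x hx) (hpos x hx).le

lemma ConvexOn.deriv_nonpos_of_tendsto (hconv : ConvexOn ℝ (Ici R) ψ)
    (hlim : Tendsto ψ atTop (𝓝 L)) {x : ℝ} (hx : R ≤ x) (hψ : DifferentiableAt ℝ ψ x) :
    deriv ψ x ≤ 0 := by
  have hslope : Tendsto (slope ψ x) atTop (𝓝 0) := by
    have hinv : Tendsto (fun y => (y - x)⁻¹) atTop (𝓝 0) :=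
      tendsto_inv_atTop_zero.comp (tendsto_atTop_add_const_right _ (-x) tendsto_id)
    simpa [slope_fun_def] using hinv.mul (hlim.sub_const (ψ x))
  refine ge_of_tendsto hslope ?_
  filter_upwards [eventually_gt_atTop x] with y hy
  exact hconv.deriv_le_slope hx (hx.trans hy.le) hy hψ

lemma ConvexOn.tendsto_deriv_of_tendsto (hconv : ConvexOn ℝ (Ici R) ψ)
    (hlim : Tendsto ψ atTop (𝓝 L)) (hψ : Differentiable ℝ ψ) :
    Tendsto (deriv ψ) atTop (𝓝 0) := by
  have hshift : Tendsto (fun x => slope ψ (x - 1) x) atTop (𝓝 0) := by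
    have hlim' : Tendsto (fun x => ψ (x - 1)) atTop (𝓝 L) :=
      hlim.comp (tendsto_atTop_add_const_right _ (-1) tendsto_id)
    simpa [slope_fun_def] using hlim.sub hlim'
  refine tendsto_of_tendsto_of_tendsto_of_le_of_le' hshift tendsto_const_nhds ?_ ?_
  · filter_upwards [eventually_ge_atTop (R + 1)] with x hx
    exact hconv.slope_le_deriv (mem_Ici.2 (by linarith)) (mem_Ici.2 (by linarith)) (by linarith)
      (hψ x)
  · filter_upwards [eventually_ge_atTop R] with x hx
    exact hconv.deriv_nonpos_of_tendsto hlim hx (hψ x)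

lemma ConvexOn.antitoneOn_of_tendsto (hconv : ConvexOn ℝ (Ici R) ψ)
    (hlim : Tendsto ψ atTop (𝓝 L)) (hψ : Differentiable ℝ ψ) : AntitoneOn ψ (Ici R) :=
  antitoneOn_of_deriv_nonpos (convex_Ici R) hψ.continuous.continuousOn hψ.differentiableOn
    fun x hx => hconv.deriv_nonpos_of_tendsto hlim (interior_subset hx) (hψ x)

end ConvexDecay

section TailIntegral

variable {f : ℝ → ℝ} {a : ℝ}

lemma integrableOn_Ioi_of_integrableOn_mul (hf : ContinuousOn f (Ici a))
    (hxf : IntegrableOn (fun x => x * f x) (Ioi a)) : IntegrableOn f (Ioi a) := by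
  set b := max a 1
  have hbounded : IntegrableOn f (Icc a b) := (hf.mono Icc_subset_Ici_self).integrableOn_Icc
  have htail : IntegrableOn f (Ioi b) := by
    refine Integrable.mono (hxf.mono_set (Ioi_subset_Ioi (le_max_left a 1)))
      ((hf.mono (Ioi_subset_Ici (le_max_left a 1))).aestronglyMeasurable measurableSet_Ioi) ?_
    filter_upwards [ae_restrict_mem measurableSet_Ioi] with x hx
    have hx1 : 1 ≤ |x| := (le_max_right a 1).trans (hx.out.le.trans (le_abs_self x))
    rw [norm_mul]
    exact le_mul_of_one_le_left (norm_nonneg _) hx1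
  refine (hbounded.union htail).mono_set fun x hx => ?_
  rcases le_or_gt x b with h | h
  exacts [Or.inl ⟨hx.out.le, h⟩, Or.inr h]

lemma hasDerivAt_integral_Ioi (hf : IntegrableOn f (Ioi a)) (hfc : ContinuousOn f (Ioi a))
    {u : ℝ} (hu : a < u) : HasDerivAt (fun x => ∫ s in Ioi x, f s) (-f u) u := by
  have hprim : HasDerivAt (fun x => ∫ s in a..x, f s) (f u) u :=
    intervalIntegral.integral_hasDerivAt_right
      ((intervalIntegrable_iff_integrableOn_Ioc_of_le hu.le).2 (hf.mono_set Ioc_subset_Ioi_self))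
      (hfc.stronglyMeasurableAtFilter isOpen_Ioi u hu) (hfc.continuousAt (Ioi_mem_nhds hu))
  have hsplit : (fun x => (∫ s in Ioi a, f s) - ∫ s in a..x, f s) =ᶠ[𝓝 u]
      fun x => ∫ s in Ioi x, f s := by
    filter_upwards [Ioi_mem_nhds hu] with x hx
    rw [sub_eq_iff_eq_add', intervalIntegral.integral_interval_add_Ioi hf
      (hf.mono_set (Ioi_subset_Ioi hx.out.le))]
  exact (hprim.const_sub _).congr_of_eventuallyEq hsplit.symm

lemma hasDerivAt_integral_Ioi_sub_mul (hf : IntegrableOn f (Ioi a))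
    (hxf : IntegrableOn (fun x => x * f x) (Ioi a)) (hfc : ContinuousOn f (Ioi a)) {u : ℝ}
    (hu : a < u) :
    HasDerivAt (fun x => ∫ s in Ioi x, (s - x) * f s) (-∫ s in Ioi u, f s) u := by
  have hsplit : (fun x => (∫ s in Ioi x, s * f s) - x * ∫ s in Ioi x, f s) =ᶠ[𝓝 u]
      fun x => ∫ s in Ioi x, (s - x) * f s := by
    filter_upwards [Ioi_mem_nhds hu] with x hx
    have hsub : Ioi x ⊆ Ioi a := Ioi_subset_Ioi hx.out.le
    simp_rw [sub_mul]
    rw [integral_sub (hxf.mono_set hsub) ((hf.mono_set hsub).const_mul x), integral_const_mul]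
  have hderiv := (hasDerivAt_integral_Ioi hxf (continuousOn_id.mul hfc) hu).sub
    ((hasDerivAt_id u).mul (hasDerivAt_integral_Ioi hf hfc hu))
  refine (hderiv.congr_of_eventuallyEq hsplit.symm).congr_deriv ?_
  simp only [id]
  ring

end TailIntegral

section Wronskian

variable {f g : ℝ → ℝ}

lemma hasDerivAt_wronskian_of_ode {q₀ q₁ : ℝ → ℝ} {x : ℝ} (hf : ContDiff ℝ 2 f)
    (hg : ContDiff ℝ 2 g) (hf_ode : deriv (deriv f) x = q₀ x * f x)
    (hg_ode : deriv (deriv g) x = (q₀ x + q₁ x) * g x) :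
    HasDerivAt (wronskian f g) (q₁ x * (f x * g x)) x := by
  have hf' := (hf.differentiable two_ne_zero x).hasDerivAt
  have hg' := (hg.differentiable two_ne_zero x).hasDerivAt
  have hf'' := (hf.differentiable_deriv_two x).hasDerivAt
  have hg'' := (hg.differentiable_deriv_two x).hasDerivAt
  exact ((hf'.mul hg'').sub (hf''.mul hg')).congr_deriv (by rw [hf_ode, hg_ode]; ring)

lemma tendsto_wronskian_zero (hf : Tendsto f atTop (𝓝 0)) (hg : Tendsto g atTop (𝓝 0))
    (hf' : Tendsto (deriv f) atTop (𝓝 0)) (hg' : Tendsto (deriv g) atTop (𝓝 0)) :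
    Tendsto (wronskian f g) atTop (𝓝 0) := by
  unfold wronskian
  simpa using (hf.mul hg').sub (hf'.mul hg)

lemma hasDerivAt_log_div {x : ℝ} (hf : DifferentiableAt ℝ f x) (hg : DifferentiableAt ℝ g x)
    (hfx : 0 < f x) (hgx : 0 < g x) :
    HasDerivAt (fun y => log (f y / g y)) (wronskian g f x / (g x * f x)) x := by
  refine ((hf.hasDerivAt.div hg.hasDerivAt hgx.ne').log (div_pos hfx hgx).ne').congr_deriv ?_
  rw [wronskian, Pi.div_apply]
  field_simp

end Wronskian

lemma mem_Icc_of_hasDerivAt_of_tendsto_zero {w p q : ℝ → ℝ} {u : ℝ}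
    (hw : ∀ x ≥ u, HasDerivAt w (q x * p x) x) (hlim : Tendsto w atTop (𝓝 0))
    (hq : IntegrableOn q (Ioi u)) (hq0 : ∀ x > u, 0 ≤ q x) (hp : ContinuousOn p (Ici u))
    (hp0 : ∀ x ≥ u, 0 ≤ p x) (hp_anti : AntitoneOn p (Ici u)) :
    w u ∈ Icc (-(p u * ∫ x in Ioi u, q x)) 0 := by
  have hqp : IntegrableOn (fun x => q x * p x) (Ioi u) := by
    refine Integrable.mono' (hq.mul_const (p u)) (hq.aestronglyMeasurable.mul
      ((hp.mono Ioi_subset_Ici_self).aestronglyMeasurable measurableSet_Ioi)) ?_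
    filter_upwards [ae_restrict_mem measurableSet_Ioi] with x hx
    rw [norm_mul, Real.norm_of_nonneg (hq0 x hx), Real.norm_of_nonneg (hp0 x hx.out.le)]
    exact mul_le_mul_of_nonneg_left (hp_anti self_mem_Ici hx.out.le hx.out.le) (hq0 x hx)
  have hw_eq : w u = -∫ x in Ioi u, q x * p x := by
    linarith [integral_Ioi_of_hasDerivAt_of_tendsto' hw hqp hlim]
  rw [hw_eq, mem_Icc, neg_le_neg_iff, neg_nonpos, ← integral_const_mul]
  constructor
  · refine setIntegral_mono_on hqp (hq.const_mul (p u)) measurableSet_Ioi fun x hx => ?_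
    rw [mul_comm (p u)]
    exact mul_le_mul_of_nonneg_left (hp_anti self_mem_Ici hx.out.le hx.out.le) (hq0 x hx)
  · exact setIntegral_nonneg measurableSet_Ioi fun x hx => mul_nonneg (hq0 x hx) (hp0 x hx.out.le)

theorem exists_pos_tendsto_div_of_wronskian_mem_Icc {f g q : ℝ → ℝ} {R : ℝ}
    (hf : Differentiable ℝ f) (hg : Differentiable ℝ g)
    (hfpos : ∀ x > R, 0 < f x) (hgpos : ∀ x > R, 0 < g x)
    (hq : IntegrableOn q (Ioi R)) (hxq : IntegrableOn (fun x => x * q x) (Ioi R))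
    (hqc : ContinuousOn q (Ioi R)) (hq0 : ∀ x > R, 0 ≤ q x)
    (hW : ∀ x > R, wronskian g f x ∈ Icc (-(g x * f x * ∫ s in Ioi x, q s)) 0) :
    ∃ c, 0 < c ∧ Tendsto (fun x => f x / g x) atTop (𝓝 c) := by
  set ℓ := fun x => log (f x / g x)
  set T := fun x => ∫ s in Ioi x, (s - x) * q s
  have hℓ : ∀ x > R, HasDerivAt ℓ (wronskian g f x / (g x * f x)) x := fun x hx =>
    hasDerivAt_log_div (hf x) (hg x) (hfpos x hx) (hgpos x hx)
  have hℓ_anti : AntitoneOn ℓ (Ioi R) := antitoneOn_Ioi_of_hasDerivAt_nonpos hℓ fun x hx =>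
    div_nonpos_of_nonpos_of_nonneg (hW x hx).2 (mul_pos (hgpos x hx) (hfpos x hx)).le
  have hΦ_mono : MonotoneOn (fun x => ℓ x - T x) (Ioi R) := by
    refine monotoneOn_Ioi_of_hasDerivAt_nonneg
      (fun x hx => (hℓ x hx).sub (hasDerivAt_integral_Ioi_sub_mul hq hxq hqc hx)) fun x hx => ?_
    rw [sub_neg_eq_add, ← neg_le_iff_add_nonneg, le_div_iff₀ (mul_pos (hgpos x hx) (hfpos x hx))]
    linarith [(hW x hx).1]
  have hT0 : ∀ x > R, 0 ≤ T x := fun x hx => setIntegral_nonneg measurableSet_Ioi fun s hs =>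
    mul_nonneg (sub_nonneg.2 hs.out.le) (hq0 s (hx.trans hs))
  have hbdd : BddBelow (ℓ '' Ici (R + 1)) := by
    refine ⟨ℓ (R + 1) - T (R + 1), ?_⟩
    rintro _ ⟨x, hx, rfl⟩
    have hR : R < R + 1 := lt_add_one R
    have hx' : R < x := hR.trans_le hx
    linarith [hΦ_mono hR hx' hx, hT0 x hx']
  obtain ⟨L, hL⟩ := (hℓ_anti.mono (Ici_subset_Ioi.2 (lt_add_one R))).exists_tendsto_atTop hbdd
  refine ⟨exp L, exp_pos L, ((continuous_exp.tendsto L).comp hL).congr' ?_⟩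
  filter_upwards [eventually_gt_atTop R] with x hx
  exact exp_log (div_pos (hfpos x hx) (hgpos x hx))

theorem schroedinger_comparison_general (R : ℝ) (q₀ q₁ : ℝ → ℝ)
    (hq₁cont : ContinuousOn q₁ (Set.Ici R))
    (hq₀ : ∀ ζ ≥ R, 1 / 4 ≤ q₀ ζ)
    (hq₁ : ∀ ζ ≥ R, 0 ≤ q₁ ζ)
    (hq₁int : IntegrableOn (fun s => s * q₁ s) (Set.Ici R))
    (ψ₀ ψ₁ : ℝ → ℝ)
    (hψ₀reg : ContDiff ℝ 2 ψ₀) (hψ₁reg : ContDiff ℝ 2 ψ₁)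
    (hψ₀pos : ∀ ζ ≥ R, 0 < ψ₀ ζ) (hψ₁pos : ∀ ζ ≥ R, 0 < ψ₁ ζ)
    (hψ₀ode : ∀ ζ ≥ R, deriv (deriv ψ₀) ζ = q₀ ζ * ψ₀ ζ)
    (hψ₁ode : ∀ ζ ≥ R, deriv (deriv ψ₁) ζ = (q₀ ζ + q₁ ζ) * ψ₁ ζ)
    (hψ₀lim : Tendsto ψ₀ atTop (nhds 0))
    (hψ₁lim : Tendsto ψ₁ atTop (nhds 0)) :
    ∃ c : ℝ, 0 < c ∧ Tendsto (fun ζ => ψ₁ ζ / ψ₀ ζ) atTop (nhds c) := by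
  have hd₀ := hψ₀reg.differentiable two_ne_zero
  have hd₁ := hψ₁reg.differentiable two_ne_zero
  have hconv₀ : ConvexOn ℝ (Ici R) ψ₀ := convexOn_Ici_of_deriv_deriv_eq_mul hψ₀reg
    (fun ζ hζ => by linarith [hq₀ ζ hζ]) hψ₀pos hψ₀ode
  have hconv₁ : ConvexOn ℝ (Ici R) ψ₁ := convexOn_Ici_of_deriv_deriv_eq_mul hψ₁reg
    (fun ζ hζ => by linarith [hq₀ ζ hζ, hq₁ ζ hζ]) hψ₁pos hψ₁ode
  have hanti₀ := hconv₀.antitoneOn_of_tendsto hψ₀lim hd₀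
  have hanti₁ := hconv₁.antitoneOn_of_tendsto hψ₁lim hd₁
  have hprod_anti : AntitoneOn (fun ζ => ψ₀ ζ * ψ₁ ζ) (Ici R) := fun a ha b hb hab =>
    mul_le_mul (hanti₀ ha hb hab) (hanti₁ ha hb hab) (hψ₁pos b hb).le (hψ₀pos a ha).le
  have hWlim := tendsto_wronskian_zero hψ₀lim hψ₁lim
    (hconv₀.tendsto_deriv_of_tendsto hψ₀lim hd₀) (hconv₁.tendsto_deriv_of_tendsto hψ₁lim hd₁)
  have hxq₁ : IntegrableOn (fun s => s * q₁ s) (Ioi R) := hq₁int.mono_set Ioi_subset_Ici_self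
  have hq₁int' : IntegrableOn q₁ (Ioi R) := integrableOn_Ioi_of_integrableOn_mul hq₁cont hxq₁
  refine exists_pos_tendsto_div_of_wronskian_mem_Icc hd₁ hd₀ (fun ζ hζ => hψ₁pos ζ hζ.le)
    (fun ζ hζ => hψ₀pos ζ hζ.le) hq₁int' hxq₁ (hq₁cont.mono Ioi_subset_Ici_self)
    (fun ζ hζ => hq₁ ζ hζ.le) fun u hu => ?_
  have hRu : Ici u ⊆ Ici R := Ici_subset_Ici.2 hu.le
  exact mem_Icc_of_hasDerivAt_of_tendsto_zero (fun ζ hζ => hasDerivAt_wronskian_of_ode hψ₀reg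
      hψ₁reg (hψ₀ode ζ (hRu hζ)) (hψ₁ode ζ (hRu hζ))) hWlim
    (hq₁int'.mono_set (Ioi_subset_Ioi hu.le)) (fun ζ hζ => hq₁ ζ (hRu hζ.le))
    (hd₀.continuous.mul hd₁.continuous).continuousOn
    (fun ζ hζ => (mul_pos (hψ₀pos ζ (hRu hζ)) (hψ₁pos ζ (hRu hζ))).le) (hprod_anti.mono hRu)

/-- Comparison lemma for Schrödinger-type equations: if `ψ₀'' = q₀ ψ₀` and
`ψ₁'' = (q₀ + q₁) ψ₁` on `[R,∞)` with `q₀ ≥ 1/4`, `q₁ ≥ 0`, `∫_R^∞ s q₁(s) ds < ∞`,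
and both `ψ₀, ψ₁` are positive and tend to `0` at `+∞`, then `ψ₁/ψ₀` tends to a
finite positive limit. -/
theorem schroedinger_comparison (R : ℝ) (q₀ q₁ : ℝ → ℝ)
    (hq₀cont : ContinuousOn q₀ (Set.Ici R))
    (hq₁cont : ContinuousOn q₁ (Set.Ici R))
    (hq₀ : ∀ ζ ≥ R, 1 / 4 ≤ q₀ ζ)
    (hq₁ : ∀ ζ ≥ R, 0 ≤ q₁ ζ)
    (hq₁int : IntegrableOn (fun s => s * q₁ s) (Set.Ici R))
    (ψ₀ ψ₁ : ℝ → ℝ)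
    (hψ₀reg : ContDiff ℝ 2 ψ₀) (hψ₁reg : ContDiff ℝ 2 ψ₁)
    (hψ₀pos : ∀ ζ ≥ R, 0 < ψ₀ ζ) (hψ₁pos : ∀ ζ ≥ R, 0 < ψ₁ ζ)
    (hψ₀ode : ∀ ζ ≥ R, deriv (deriv ψ₀) ζ = q₀ ζ * ψ₀ ζ)
    (hψ₁ode : ∀ ζ ≥ R, deriv (deriv ψ₁) ζ = (q₀ ζ + q₁ ζ) * ψ₁ ζ)
    (hψ₀lim : Tendsto ψ₀ atTop (nhds 0))
    (hψ₁lim : Tendsto ψ₁ atTop (nhds 0)) :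
    ∃ c : ℝ, 0 < c ∧ Tendsto (fun ζ => ψ₁ ζ / ψ₀ ζ) atTop (nhds c) :=
  schroedinger_comparison_general R q₀ q₁ hq₁cont hq₀ hq₁ hq₁int ψ₀ ψ₁ hψ₀reg hψ₁reg hψ₀pos hψ₁pos
    hψ₀ode hψ₁ode hψ₀lim hψ₁lim
end

section
/- Let n > 1 and let φ : (0,∞) → (0,1) be the decreasing solution of the self-similar profile equation ξ² φ'' + ( ξ³/2 − 4ξ/(n−1) ) φ' + (2(n+1)/(n−1)²) φ(1 − φ^{n−1}) = 0 with lim_{ξ→0+} φ(ξ) = 1 and lim_{ξ→∞} φ(ξ) = 0. Then there exists a constant C > 0 such that φ(ξ) / ( e^{−ξ²/4} ξ^{(5−n)/(n−1)} ) → C as ξ → ∞. -/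
/-!
Put `β = (5 - n)/(n - 1)`, `b = 2(n + 1)/(n - 1)²` and `F = φ'/ξ + φ/2 - βφ/ξ²`. The profile
equation is equivalent to `F' = (2βφ - bφ(1 - φ^(n-1)))/ξ³`, so `|F'| ≤ Kφ/ξ³` with
`K = |2β - b| + b`. Hence `F` converges, and its limit is `0` because `φ'/ξ = F - φ/2 + βφ/ξ²`
while `φ` is bounded. Integrating `F'` from `ξ` to `∞` and using that `φ` decreases gives
`|F| ≤ Kφ/(2ξ²)`, which makes `log φ + ξ²/4 - (β + K/2) log ξ` decreasing: a Gaussian envelope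
for `φ`. Integrating `F'` once more against this envelope improves the bound to `|F| ≤ 4Kφ/ξ⁴`.
Now `W = log φ + ξ²/4 - β log ξ` has `W' = ξF/φ = O(ξ⁻³)`, so `W → ℓ` and `C = exp ℓ`.
-/

open Real Filter Set Topology

section Comparison

variable {f f' g g' : ℝ → ℝ} {a : ℝ}

theorem monotoneOn_Ici_of_hasDerivAt_nonneg (hf : ∀ x ∈ Ici a, HasDerivAt f (f' x) x)
    (hf' : ∀ x ∈ Ioi a, 0 ≤ f' x) : MonotoneOn f (Ici a) :=
  monotoneOn_of_hasDerivWithinAt_nonneg (convex_Ici a)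
    (fun x hx => (hf x hx).continuousAt.continuousWithinAt)
    (by simpa using fun x hx => (hf x (Ioi_subset_Ici_self hx)).hasDerivWithinAt)
    (by simpa using hf')

theorem antitoneOn_Ici_of_hasDerivAt_nonpos (hf : ∀ x ∈ Ici a, HasDerivAt f (f' x) x)
    (hf' : ∀ x ∈ Ioi a, f' x ≤ 0) : AntitoneOn f (Ici a) := by
  have := monotoneOn_Ici_of_hasDerivAt_nonneg (fun x hx => (hf x hx).neg)
    fun x hx => neg_nonneg.mpr (hf' x hx)
  exact fun x hx y hy hxy => neg_le_neg_iff.mp (this hx hy hxy)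

theorem abs_sub_le_of_abs_deriv_le (hf : ∀ x ∈ Ici a, HasDerivAt f (f' x) x)
    (hg : ∀ x ∈ Ici a, HasDerivAt g (g' x) x) (hfg : ∀ x ∈ Ioi a, |f' x| ≤ -g' x)
    {x y : ℝ} (hax : a ≤ x) (hxy : x ≤ y) : |f y - f x| ≤ g x - g y := by
  have hx : x ∈ Ici a := hax
  have hy : y ∈ Ici a := hax.trans hxy
  have hsub := monotoneOn_Ici_of_hasDerivAt_nonneg (fun x hx => (hf x hx).sub (hg x hx))
    fun x hx => by linarith [neg_abs_le (f' x), hfg x hx]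
  have hadd := antitoneOn_Ici_of_hasDerivAt_nonpos (fun x hx => (hf x hx).add (hg x hx))
    fun x hx => by linarith [le_abs_self (f' x), hfg x hx]
  have h₁ := hsub hx hy hxy
  have h₂ := hadd hx hy hxy
  simp only [Pi.add_apply, Pi.sub_apply] at h₁ h₂
  rw [abs_le]
  constructor <;> linarith

theorem abs_le_of_abs_deriv_le_of_tendsto (hf : ∀ x ∈ Ici a, HasDerivAt f (f' x) x)
    (hg : ∀ x ∈ Ici a, HasDerivAt g (g' x) x) (hfg : ∀ x ∈ Ioi a, |f' x| ≤ -g' x)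
    (hf0 : Tendsto f atTop (𝓝 0)) (hg0 : Tendsto g atTop (𝓝 0)) : |f a| ≤ g a := by
  have key : Tendsto (fun y => |f y - f a|) atTop (𝓝 |0 - f a|) :=
    (hf0.sub_const _).abs
  have := le_of_tendsto_of_tendsto key (tendsto_const_nhds.sub hg0)
    (eventually_atTop.mpr ⟨a, fun y hy => abs_sub_le_of_abs_deriv_le hf hg hfg le_rfl hy⟩)
  simpa using this

theorem exists_tendsto_of_abs_deriv_le (hf : ∀ x ∈ Ici a, HasDerivAt f (f' x) x)
    (hg : ∀ x ∈ Ici a, HasDerivAt g (g' x) x) (hfg : ∀ x ∈ Ioi a, |f' x| ≤ -g' x)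
    (hg0 : Tendsto g atTop (𝓝 0)) : ∃ L, Tendsto f atTop (𝓝 L) := by
  refine cauchySeq_tendsto_of_complete (Metric.cauchySeq_iff'.mpr fun ε hε => ?_)
  obtain ⟨N, hN⟩ := eventually_atTop.mp
    ((eventually_ge_atTop a).and (hg0.eventually (Metric.ball_mem_nhds 0 (half_pos hε))))
  refine ⟨N, fun y hy => ?_⟩
  have hgN := (hN N le_rfl).2
  have hgy := (hN y hy).2
  rw [Real.dist_eq, sub_zero, abs_lt] at hgN hgy
  rw [Real.dist_eq]
  linarith [abs_sub_le_of_abs_deriv_le hf hg hfg (hN N le_rfl).1 hy]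

theorem tendsto_atTop_of_le_deriv {c : ℝ} (hc : 0 < c) (hf : ∀ x ∈ Ici a, HasDerivAt f (f' x) x)
    (hf' : ∀ x ∈ Ioi a, c ≤ f' x) : Tendsto f atTop atTop := by
  have hmono := monotoneOn_Ici_of_hasDerivAt_nonneg
    (fun x hx => (hf x hx).sub ((hasDerivAt_id x).const_mul c))
    fun x hx => by simpa using hf' x hx
  refine tendsto_atTop_mono' _ ?_
    (tendsto_atTop_add_const_right _ (f a - c * a) (tendsto_id.const_mul_atTop hc))
  filter_upwards [eventually_ge_atTop a] with x hx
  have := hmono self_mem_Ici hx hx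
  simp only [Pi.sub_apply, id] at this ⊢
  linarith

theorem eq_zero_of_tendsto_deriv_div {l L : ℝ} (hf : ∀ᶠ x in atTop, HasDerivAt f (f' x) x)
    (hfl : Tendsto f atTop (𝓝 l)) (hL : Tendsto (fun x => f' x / x) atTop (𝓝 L)) : L = 0 := by
  by_contra hL0
  wlog hpos : 0 < L generalizing f f' l L
  · refine this (f := -f) (f' := -f') (hf.mono fun x hx => hx.neg) hfl.neg
      (by simpa only [Pi.neg_apply, neg_div] using hL.neg) (neg_ne_zero.mpr hL0) ?_
    exact neg_pos.mpr (lt_of_le_of_ne (not_lt.mp hpos) hL0)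
  obtain ⟨a, ha⟩ := eventually_atTop.mp <| hf.and <|
    (hL.eventually (lt_mem_nhds (half_lt_self hpos))).and (eventually_ge_atTop 1)
  refine not_tendsto_nhds_of_tendsto_atTop
    (tendsto_atTop_of_le_deriv (half_pos hpos) (fun x hx => (ha x hx).1) fun x hx => ?_) l hfl
  obtain ⟨-, hlt, hx1⟩ := ha x hx.le
  rw [lt_div_iff₀ (by linarith)] at hlt
  nlinarith

end Comparison

theorem hasDerivAt_div_sq (c : ℝ) {x : ℝ} (hx : x ≠ 0) :
    HasDerivAt (fun s => c / s ^ 2) (-(2 * c / x ^ 3)) x := by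
  refine ((hasDerivAt_const x c).div (hasDerivAt_pow 2 x) (pow_ne_zero 2 hx)).congr_deriv ?_
  field_simp
  ring

theorem hasDerivAt_gaussian_mul_rpow (p : ℝ) {s : ℝ} (hs : 0 < s) :
    HasDerivAt (fun t => exp (-t ^ 2 / 4) * t ^ p)
      (exp (-s ^ 2 / 4) * s ^ (p - 1) * (p - s ^ 2 / 2)) s := by
  have hexp : HasDerivAt (fun t : ℝ => exp (-t ^ 2 / 4)) (exp (-s ^ 2 / 4) * (-(2 * s) / 4)) s := by
    simpa using ((hasDerivAt_pow 2 s).neg.div_const 4).exp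
  refine (hexp.mul (hasDerivAt_rpow_const (p := p) (Or.inl hs.ne'))).congr_deriv ?_
  rw [show s ^ p = s ^ (p - 1) * s by rw [← rpow_add_one hs.ne']; ring_nf]
  ring

theorem gaussian_mul_rpow_add_one_le_neg_four_mul_deriv {p s : ℝ} (hs : 0 < s)
    (hp : 4 * p ≤ s ^ 2) :
    exp (-s ^ 2 / 4) * s ^ (p + 1) ≤ -(4 * (exp (-s ^ 2 / 4) * s ^ (p - 1) * (p - s ^ 2 / 2))) := by
  have h : s ^ (p + 1) = s ^ (p - 1) * s ^ 2 := by
    rw [← rpow_natCast, ← rpow_add hs]; ring_nf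
  have hpos : 0 < exp (-s ^ 2 / 4) * s ^ (p - 1) := by positivity
  rw [h]
  nlinarith

theorem tendsto_gaussian_mul_rpow_atTop (p : ℝ) :
    Tendsto (fun t => exp (-t ^ 2 / 4) * t ^ p) atTop (𝓝 0) := by
  have := (tendsto_rpow_mul_exp_neg_mul_atTop_nhds_zero (p / 2) (1 / 4) (by norm_num)).comp
    (tendsto_pow_atTop two_ne_zero)
  refine this.congr' ?_
  filter_upwards [eventually_ge_atTop 0] with t ht
  simp only [Function.comp_apply]
  rw [← rpow_natCast, ← rpow_mul ht]
  ring_nf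

noncomputable def gaussFlux (β : ℝ) (φ : ℝ → ℝ) (ξ : ℝ) : ℝ :=
  deriv φ ξ / ξ + φ ξ / 2 - β * φ ξ / ξ ^ 2

/-- `log (φ ξ / (exp (-ξ ^ 2 / 4) * ξ ^ κ))` -/
noncomputable def logGaussRatio (κ : ℝ) (φ : ℝ → ℝ) (ξ : ℝ) : ℝ :=
  log (φ ξ) + ξ ^ 2 / 4 - κ * log ξ

theorem hasDerivAt_gaussFlux_of_ode {φ g : ℝ → ℝ} {β ξ : ℝ} (hξ : ξ ≠ 0)
    (hφ : DifferentiableAt ℝ φ ξ) (hφ' : DifferentiableAt ℝ (deriv φ) ξ)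
    (hode : ξ ^ 2 * deriv (deriv φ) ξ + (ξ ^ 3 / 2 - (β + 1) * ξ) * deriv φ ξ + g (φ ξ) = 0) :
    HasDerivAt (gaussFlux β φ) ((2 * β * φ ξ - g (φ ξ)) / ξ ^ 3) ξ := by
  have h := ((hφ'.hasDerivAt.div (hasDerivAt_id ξ) hξ).add (hφ.hasDerivAt.div_const 2)).sub
    ((hφ.hasDerivAt.const_mul β).div (hasDerivAt_pow 2 ξ) (pow_ne_zero 2 hξ))
  refine h.congr_deriv ?_
  have hφ'' : deriv (deriv φ) ξ =
      -((ξ ^ 3 / 2 - (β + 1) * ξ) * deriv φ ξ + g (φ ξ)) / ξ ^ 2 := by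
    field_simp
    linarith
  rw [hφ'', id]
  field_simp
  ring

theorem hasDerivAt_logGaussRatio {φ : ℝ → ℝ} (β κ : ℝ) {ξ : ℝ} (hξ : 0 < ξ)
    (hφ : DifferentiableAt ℝ φ ξ) (hpos : 0 < φ ξ) :
    HasDerivAt (logGaussRatio κ φ) (ξ * gaussFlux β φ ξ / φ ξ + (β - κ) / ξ) ξ := by
  have h := ((hφ.hasDerivAt.log hpos.ne').add ((hasDerivAt_pow 2 ξ).div_const 4)).sub
    ((hasDerivAt_log hξ.ne').const_mul κ)
  refine h.congr_deriv ?_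
  simp only [gaussFlux]
  field_simp
  ring

theorem exp_logGaussRatio_mul {φ : ℝ → ℝ} (κ : ℝ) {ξ : ℝ} (hξ : 0 < ξ) (hpos : 0 < φ ξ) :
    exp (logGaussRatio κ φ ξ) * (exp (-ξ ^ 2 / 4) * ξ ^ κ) = φ ξ := by
  rw [rpow_def_of_pos hξ, ← exp_add, ← exp_add, logGaussRatio]
  ring_nf
  exact exp_log hpos

section DecayingProfile

variable {φ F' : ℝ → ℝ} {β K : ℝ}

theorem tendsto_gaussFlux_atTop (hK : 0 ≤ K) (hd : ∀ ξ > 0, DifferentiableAt ℝ φ ξ)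
    (hanti : AntitoneOn φ (Ioi 0)) (hlim : Tendsto φ atTop (𝓝 0))
    (hF : ∀ ξ > 0, HasDerivAt (gaussFlux β φ) (F' ξ) ξ)
    (hF' : ∀ ξ > 0, |F' ξ| ≤ K * φ ξ / ξ ^ 3) :
    Tendsto (gaussFlux β φ) atTop (𝓝 0) := by
  obtain ⟨L, hL⟩ := exists_tendsto_of_abs_deriv_le (a := 1)
    (fun x hx => hF x (one_pos.trans_le hx))
    (fun x hx => hasDerivAt_div_sq (K * φ 1 / 2) (one_pos.trans_le hx).ne')
    (fun x hx => by
      have hx0 : (0 : ℝ) < x := one_pos.trans hx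
      calc |F' x| ≤ K * φ x / x ^ 3 := hF' x hx0
        _ ≤ K * φ 1 / x ^ 3 := by
          gcongr; exact hanti (mem_Ioi.mpr one_pos) hx0 hx.le
        _ = -(-(2 * (K * φ 1 / 2) / x ^ 3)) := by ring)
    (tendsto_const_nhds.div_atTop (tendsto_pow_atTop two_ne_zero))
  have hderiv : Tendsto (fun x => deriv φ x / x) atTop (𝓝 L) := by
    have h := (hL.sub (hlim.div_const 2)).add
      ((hlim.const_mul β).div_atTop (tendsto_pow_atTop two_ne_zero))
    simp only [zero_div, sub_zero, add_zero] at h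
    refine h.congr' ?_
    filter_upwards [eventually_ne_atTop 0] with x hx
    simp only [gaussFlux]
    ring
  obtain rfl := eq_zero_of_tendsto_deriv_div
    ((eventually_gt_atTop 0).mono fun x hx => (hd x hx).hasDerivAt) hlim hderiv
  exact hL

theorem abs_gaussFlux_le (hK : 0 ≤ K) (hd : ∀ ξ > 0, DifferentiableAt ℝ φ ξ)
    (hanti : AntitoneOn φ (Ioi 0)) (hlim : Tendsto φ atTop (𝓝 0))
    (hF : ∀ ξ > 0, HasDerivAt (gaussFlux β φ) (F' ξ) ξ)
    (hF' : ∀ ξ > 0, |F' ξ| ≤ K * φ ξ / ξ ^ 3) {ξ : ℝ} (hξ : 0 < ξ) :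
    |gaussFlux β φ ξ| ≤ K * φ ξ / 2 / ξ ^ 2 :=
  abs_le_of_abs_deriv_le_of_tendsto
    (fun x hx => hF x (hξ.trans_le hx))
    (fun x hx => hasDerivAt_div_sq (K * φ ξ / 2) (hξ.trans_le hx).ne')
    (fun x hx => by
      have hx0 : 0 < x := hξ.trans hx
      calc |F' x| ≤ K * φ x / x ^ 3 := hF' x hx0
        _ ≤ K * φ ξ / x ^ 3 := by gcongr; exact hanti (mem_Ioi.mpr hξ) hx0 hx.le
        _ = -(-(2 * (K * φ ξ / 2) / x ^ 3)) := by ring)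
    (tendsto_gaussFlux_atTop hK hd hanti hlim hF hF')
    (tendsto_const_nhds.div_atTop (tendsto_pow_atTop two_ne_zero))

theorem antitoneOn_logGaussRatio (hK : 0 ≤ K) (hd : ∀ ξ > 0, DifferentiableAt ℝ φ ξ)
    (hpos : ∀ ξ > 0, 0 < φ ξ) (hanti : AntitoneOn φ (Ioi 0)) (hlim : Tendsto φ atTop (𝓝 0))
    (hF : ∀ ξ > 0, HasDerivAt (gaussFlux β φ) (F' ξ) ξ)
    (hF' : ∀ ξ > 0, |F' ξ| ≤ K * φ ξ / ξ ^ 3) :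
    AntitoneOn (logGaussRatio (β + K / 2) φ) (Ioi 0) := by
  refine antitoneOn_of_hasDerivWithinAt_nonpos (convex_Ioi 0)
    (fun x hx =>
      (hasDerivAt_logGaussRatio β _ hx (hd x hx) (hpos x hx)).continuousAt.continuousWithinAt)
    (fun x hx => (hasDerivAt_logGaussRatio β _ (interior_subset hx) (hd x (interior_subset hx))
      (hpos x (interior_subset hx))).hasDerivWithinAt) fun x hx => ?_
  rw [interior_Ioi, mem_Ioi] at hx
  have hφ := hpos x hx
  have hflux := (abs_le.mp (abs_gaussFlux_le hK hd hanti hlim hF hF' hx)).2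
  calc x * gaussFlux β φ x / φ x + (β - (β + K / 2)) / x
      ≤ x * (K * φ x / 2 / x ^ 2) / φ x + (β - (β + K / 2)) / x := by gcongr
    _ = 0 := by field_simp; ring

theorem abs_gaussFlux_le_of_sq_le (hK : 0 ≤ K) (hd : ∀ ξ > 0, DifferentiableAt ℝ φ ξ)
    (hpos : ∀ ξ > 0, 0 < φ ξ) (hanti : AntitoneOn φ (Ioi 0)) (hlim : Tendsto φ atTop (𝓝 0))
    (hF : ∀ ξ > 0, HasDerivAt (gaussFlux β φ) (F' ξ) ξ)
    (hF' : ∀ ξ > 0, |F' ξ| ≤ K * φ ξ / ξ ^ 3) {ξ : ℝ} (hξ : 0 < ξ)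
    (hξ2 : 4 * (β + K / 2 - 4) ≤ ξ ^ 2) :
    |gaussFlux β φ ξ| ≤ 4 * K * φ ξ / ξ ^ 4 := by
  set γ := β + K / 2
  set A := exp (logGaussRatio γ φ ξ)
  have henv : ∀ s, ξ ≤ s → φ s ≤ A * (exp (-s ^ 2 / 4) * s ^ γ) := fun s hs => by
    rw [← exp_logGaussRatio_mul γ (hξ.trans_le hs) (hpos s (hξ.trans_le hs))]
    exact mul_le_mul_of_nonneg_right (exp_le_exp.mpr <|
      antitoneOn_logGaussRatio hK hd hpos hanti hlim hF hF' hξ (hξ.trans_le hs) hs)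
      (by have := hξ.trans_le hs; positivity)
  have hdiv : ∀ s : ℝ, 0 < s → s ^ γ / s ^ 3 = s ^ (γ - 4 + 1) := fun s hs => by
    rw [← rpow_natCast, ← rpow_sub hs]; norm_num; ring_nf
  have hξγ : ξ ^ γ / ξ ^ 4 = ξ ^ (γ - 4) := by
    rw [← rpow_natCast, ← rpow_sub hξ]; norm_num
  calc |gaussFlux β φ ξ| ≤ 4 * K * A * (exp (-ξ ^ 2 / 4) * ξ ^ (γ - 4)) := by
        refine abs_le_of_abs_deriv_le_of_tendsto (fun x hx => hF x (hξ.trans_le hx))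
          (fun x hx => (hasDerivAt_gaussian_mul_rpow (γ - 4) (hξ.trans_le hx)).const_mul _)
          (fun s hs => ?_) (tendsto_gaussFlux_atTop hK hd hanti hlim hF hF')
          (by simpa using (tendsto_gaussian_mul_rpow_atTop (γ - 4)).const_mul (4 * K * A))
        have hs0 : 0 < s := hξ.trans hs
        have htail := gaussian_mul_rpow_add_one_le_neg_four_mul_deriv hs0
          (hξ2.trans (pow_le_pow_left₀ hξ.le hs.le 2))
        calc |F' s| ≤ K * φ s / s ^ 3 := hF' s hs0
          _ ≤ K * (A * (exp (-s ^ 2 / 4) * s ^ γ)) / s ^ 3 := by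
            gcongr; exact henv s hs.le
          _ = K * A * (exp (-s ^ 2 / 4) * s ^ (γ - 4 + 1)) := by
            rw [← hdiv s hs0]; ring
          _ ≤ _ := by
            have : 0 ≤ K * A := by positivity
            nlinarith [mul_le_mul_of_nonneg_left htail this]
    _ = 4 * K * φ ξ / ξ ^ 4 := by
        rw [← hξγ, ← exp_logGaussRatio_mul γ hξ (hpos ξ hξ)]
        ring

theorem exists_tendsto_logGaussRatio (hK : 0 ≤ K) (hd : ∀ ξ > 0, DifferentiableAt ℝ φ ξ)
    (hpos : ∀ ξ > 0, 0 < φ ξ) (hanti : AntitoneOn φ (Ioi 0)) (hlim : Tendsto φ atTop (𝓝 0))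
    (hF : ∀ ξ > 0, HasDerivAt (gaussFlux β φ) (F' ξ) ξ)
    (hF' : ∀ ξ > 0, |F' ξ| ≤ K * φ ξ / ξ ^ 3) :
    ∃ ℓ, Tendsto (logGaussRatio β φ) atTop (𝓝 ℓ) := by
  obtain ⟨a, ha⟩ := eventually_atTop.mp <| (eventually_gt_atTop 0).and <|
    (tendsto_pow_atTop two_ne_zero).eventually_ge_atTop (4 * (β + K / 2 - 4))
  have ha0 : ∀ x, a ≤ x → 0 < x := fun x hx => (ha x hx).1
  refine exists_tendsto_of_abs_deriv_le
    (fun x hx => hasDerivAt_logGaussRatio β β (ha0 x hx) (hd x (ha0 x hx)) (hpos x (ha0 x hx)))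
    (fun x hx => hasDerivAt_div_sq (2 * K) (ha0 x hx).ne') (fun x hx => ?_)
    (tendsto_const_nhds.div_atTop (tendsto_pow_atTop two_ne_zero))
  obtain ⟨hx0, hx2⟩ := ha x hx.le
  have hφ := hpos x hx0
  rw [sub_self, zero_div, add_zero, abs_div, abs_mul, abs_of_pos hx0, abs_of_pos hφ]
  calc x * |gaussFlux β φ x| / φ x ≤ x * (4 * K * φ x / x ^ 4) / φ x := by
        gcongr; exact abs_gaussFlux_le_of_sq_le hK hd hpos hanti hlim hF hF' hx0 hx2
    _ = -(-(2 * (2 * K) / x ^ 3)) := by field_simp; ring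

theorem exists_tendsto_div_gaussian_mul_rpow (hK : 0 ≤ K) (hd : ∀ ξ > 0, DifferentiableAt ℝ φ ξ)
    (hpos : ∀ ξ > 0, 0 < φ ξ) (hanti : AntitoneOn φ (Ioi 0)) (hlim : Tendsto φ atTop (𝓝 0))
    (hF : ∀ ξ > 0, HasDerivAt (gaussFlux β φ) (F' ξ) ξ)
    (hF' : ∀ ξ > 0, |F' ξ| ≤ K * φ ξ / ξ ^ 3) :
    ∃ C > 0, Tendsto (fun ξ => φ ξ / (exp (-ξ ^ 2 / 4) * ξ ^ β)) atTop (𝓝 C) := by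
  obtain ⟨ℓ, hℓ⟩ := exists_tendsto_logGaussRatio hK hd hpos hanti hlim hF hF'
  refine ⟨exp ℓ, exp_pos ℓ, (continuous_exp.tendsto ℓ |>.comp hℓ).congr' ?_⟩
  filter_upwards [eventually_gt_atTop 0] with ξ hξ
  rw [Function.comp_apply, eq_div_iff (by positivity), exp_logGaussRatio_mul β hξ (hpos ξ hξ)]

end DecayingProfile

theorem abs_two_mul_sub_mul_one_sub_rpow_le {β b q y : ℝ} (hb : 0 ≤ b) (hq : 0 ≤ q)
    (hy₀ : 0 ≤ y) (hy₁ : y ≤ 1) :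
    |2 * β * y - b * y * (1 - y ^ q)| ≤ (|2 * β - b| + b) * y := by
  have hyq₀ : 0 ≤ y ^ q := rpow_nonneg hy₀ q
  have hyq₁ : y ^ q ≤ 1 := rpow_le_one hy₀ hy₁ hq
  calc |2 * β * y - b * y * (1 - y ^ q)| = |(2 * β - b) + b * y ^ q| * y := by
        rw [show 2 * β * y - b * y * (1 - y ^ q) = ((2 * β - b) + b * y ^ q) * y by ring,
          abs_mul, abs_of_nonneg hy₀]
    _ ≤ (|2 * β - b| + b) * y := by
        gcongr
        calc |(2 * β - b) + b * y ^ q| ≤ |2 * β - b| + |b * y ^ q| := abs_add_le _ _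
          _ ≤ |2 * β - b| + b := by
            rw [abs_of_nonneg (mul_nonneg hb hyq₀)]
            gcongr
            exact mul_le_of_le_one_right hb hyq₁

theorem profile_asymptotics_at_infinity_general (n : ℝ) (hn : 1 < n)
    (φ : ℝ → ℝ) (hreg : ContDiffOn ℝ 2 φ (Set.Ioi 0))
    (hode : ∀ ξ > (0:ℝ),
      ξ ^ 2 * deriv (deriv φ) ξ + (ξ ^ 3 / 2 - 4 * ξ / (n - 1)) * deriv φ ξ +
        2 * (n + 1) / (n - 1) ^ 2 * φ ξ * (1 - φ ξ ^ (n - 1)) = 0)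
    (hrange : ∀ ξ > (0:ℝ), 0 < φ ξ ∧ φ ξ < 1)
    (hmono : StrictAntiOn φ (Set.Ioi 0))
    (hliminf : Tendsto φ atTop (nhds 0)) :
    ∃ C > (0:ℝ), Tendsto
      (fun ξ => φ ξ / (Real.exp (-ξ ^ 2 / 4) * ξ ^ ((5 - n) / (n - 1))))
      atTop (nhds C) := by
  set β := (5 - n) / (n - 1) with hβ_def
  set b := 2 * (n + 1) / (n - 1) ^ 2
  have hb : 0 ≤ b := div_nonneg (by linarith) (sq_nonneg _)
  have hd : ∀ ξ > 0, DifferentiableAt ℝ φ ξ := fun ξ hξ =>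
    (hreg.differentiableOn (by norm_num)).differentiableAt (isOpen_Ioi.mem_nhds hξ)
  have hd' : ∀ ξ > 0, DifferentiableAt ℝ (deriv φ) ξ := fun ξ hξ =>
    ((hreg.deriv_of_isOpen isOpen_Ioi (m := 1) (by norm_num)).differentiableOn
      (by norm_num)).differentiableAt (isOpen_Ioi.mem_nhds hξ)
  refine exists_tendsto_div_gaussian_mul_rpow (β := β) (K := |2 * β - b| + b)
    (F' := fun ξ => (2 * β * φ ξ - b * φ ξ * (1 - φ ξ ^ (n - 1))) / ξ ^ 3) (by positivity) hd
    (fun ξ hξ => (hrange ξ hξ).1) hmono.antitoneOn hliminf (fun ξ hξ => ?_) (fun ξ hξ => ?_)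
  · refine hasDerivAt_gaussFlux_of_ode (g := fun y => b * y * (1 - y ^ (n - 1))) hξ.ne'
      (hd ξ hξ) (hd' ξ hξ) ?_
    have hβ : β + 1 = 4 / (n - 1) := by
      rw [hβ_def]
      field_simp [(sub_pos.mpr hn).ne']
      ring
    rw [hβ, ← hode ξ hξ]
    ring
  · rw [abs_div, abs_of_pos (by positivity : (0 : ℝ) < ξ ^ 3)]
    gcongr
    exact abs_two_mul_sub_mul_one_sub_rpow_le hb (by linarith) (hrange ξ hξ).1.le
      (hrange ξ hξ).2.le

/-- Asymptotics at infinity of the self-similar profile: the decreasing solution of the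
profile equation with `φ(0+) = 1`, `φ(∞) = 0` satisfies
`φ(ξ) ~ C e^{-ξ²/4} ξ^{(5-n)/(n-1)}` as `ξ → ∞` for some constant `C > 0`. -/
theorem profile_asymptotics_at_infinity (n : ℝ) (hn : 1 < n)
    (φ : ℝ → ℝ) (hreg : ContDiffOn ℝ 2 φ (Set.Ioi 0))
    (hode : ∀ ξ > (0:ℝ),
      ξ ^ 2 * deriv (deriv φ) ξ + (ξ ^ 3 / 2 - 4 * ξ / (n - 1)) * deriv φ ξ +
        2 * (n + 1) / (n - 1) ^ 2 * φ ξ * (1 - φ ξ ^ (n - 1)) = 0)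
    (hrange : ∀ ξ > (0:ℝ), 0 < φ ξ ∧ φ ξ < 1)
    (hmono : StrictAntiOn φ (Set.Ioi 0))
    (hlim0 : Tendsto φ (nhdsWithin 0 (Set.Ioi 0)) (nhds 1))
    (hliminf : Tendsto φ atTop (nhds 0)) :
    ∃ C > (0:ℝ), Tendsto
      (fun ξ => φ ξ / (Real.exp (-ξ ^ 2 / 4) * ξ ^ ((5 - n) / (n - 1))))
      atTop (nhds C) :=
  profile_asymptotics_at_infinity_general n hn φ hreg hode hrange hmono hliminf
end

section
/- Let n > 1, fix a smooth cutoff η : ℝ → [0,1] with η ≡ 1 on (−∞,0] and η ≡ 0 on [1,∞), and let dμ = ρ dζ with ρ(ζ) = exp( e^{2ζ}/4 − ((n+3)/(n−1)) ζ ). Suppose φ₁ and φ₂ are both classical solutions of φ'' + ( e^{2ζ}/2 − (n+3)/(n−1) ) φ' + (2(n+1)/(n−1)²) φ (1 − φ^{n−1}) = 0 on ℝ with 0 < φᵢ < 1, φᵢ − η ∈ H¹(ℝ, dμ), and such that m ≤ φ₁(ζ)/φ₂(ζ) ≤ M for all ζ ∈ ℝ and some 0 < m ≤ M < ∞. Then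 φ₁ = φ₂. -/
open Real MeasureTheory Filter Set Topology


lemma limit_zero_of_integrable {u : ℝ → ℝ} (hc : Continuous u) (hnn : ∀ x, 0 ≤ u x)
    (hint : IntegrableOn u (Iio 0)) {ℓ : ℝ} (hl : Tendsto u atBot (𝓝 ℓ)) : ℓ = 0 := by
  by_contra hne
  have hl0 : 0 ≤ ℓ := le_of_tendsto_of_tendsto' tendsto_const_nhds hl (fun x => hnn x)
  have hpos : 0 < ℓ := lt_of_le_of_ne hl0 (Ne.symm hne)
  have hev : ∀ᶠ x in atBot, ℓ/2 < u x := hl.eventually (eventually_gt_nhds (by linarith))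
  obtain ⟨a, ha⟩ := eventually_atBot.mp hev
  set a' := min a (-1) with ha'
  have hsub : Iic a' ⊆ Iio 0 := fun x hx => lt_of_le_of_lt (le_trans hx (min_le_right a (-1))) (by norm_num)
  have hub : IntegrableOn u (Iic a') := hint.mono_set hsub
  have hconst : IntegrableOn (fun _ : ℝ => ℓ/2) (Iic a') := by
    refine Integrable.mono' hub aestronglyMeasurable_const ?_
    rw [ae_restrict_iff' measurableSet_Iic]
    filter_upwards with x hx
    have := ha x (le_trans hx (min_le_left a (-1)))
    rw [Real.norm_of_nonneg (by linarith)]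
    linarith
  rw [integrableOn_const_iff] at hconst
  rcases hconst with h | h
  · have : ℓ = 0 := by simpa using h
    linarith
  · rw [Real.volume_Iic] at h; exact (lt_irrefl _ h).elim

lemma tendsto_one_atBot {φ : ℝ → ℝ} (hφ : Differentiable ℝ φ) (hφ' : Continuous (deriv φ))
    (hu : IntegrableOn (fun ζ => (φ ζ - 1)^2) (Iio 0))
    (hv : IntegrableOn (fun ζ => (deriv φ ζ)^2) (Iio 0)) :
    Tendsto φ atBot (𝓝 1) := by
  set u : ℝ → ℝ := fun ζ => (φ ζ - 1)^2 with hu_def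
  have hud : ∀ ζ, HasDerivAt u (2*(φ ζ - 1)*(deriv φ ζ)) ζ := by
    intro ζ
    have h1 : HasDerivAt (fun z => φ z - 1) (deriv φ ζ) ζ := ((hφ ζ).hasDerivAt).sub_const 1
    have := h1.fun_pow 2
    simpa [mul_comm, mul_assoc, mul_left_comm] using this
  have hφc : Continuous φ := hφ.continuous
  have hucont : Continuous u := by rw [hu_def]; fun_prop
  have hu'cont : Continuous (deriv u) := by
    have : deriv u = fun ζ => 2*(φ ζ - 1)*(deriv φ ζ) := funext fun ζ => (hud ζ).deriv
    rw [this]; fun_prop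
  -- deriv u integrable on Iic (-1)
  have hsum : IntegrableOn (fun ζ => u ζ + (deriv φ ζ)^2) (Iio 0) := hu.add hv
  have hu'int : IntegrableOn (deriv u) (Iio 0) := by
    refine Integrable.mono' hsum hu'cont.aestronglyMeasurable ?_
    rw [ae_restrict_iff' measurableSet_Iio]
    filter_upwards with x _
    rw [(hud x).deriv, Real.norm_eq_abs]
    have := abs_nonneg (2*(φ x - 1)*(deriv φ x))
    have h2 : |2*(φ x - 1)*(deriv φ x)| ≤ (φ x - 1)^2 + (deriv φ x)^2 := by
      rw [abs_le]; constructor <;> nlinarith [sq_nonneg (φ x - 1 + deriv φ x), sq_nonneg (φ x - 1 - deriv φ x)]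
    exact h2
  have hu'int' : IntegrableOn (deriv u) (Iic (-1)) :=
    hu'int.mono_set (fun x hx => mem_Iio.mpr (lt_of_le_of_lt (mem_Iic.mp hx) (by norm_num)))
  -- u(a) tends to a limit as a → -∞
  have hFTC : ∀ a : ℝ, a ≤ -1 → u a = u (-1) - ∫ x in a..(-1), deriv u x := by
    intro a ha
    have hi : IntervalIntegrable (deriv u) volume a (-1) := hu'cont.intervalIntegrable a (-1)
    have := intervalIntegral.integral_deriv_eq_sub (f := u) (a := a) (b := -1)
      (fun x _ => (hud x).differentiableAt) hi
    linarith
  have htendI : Tendsto (fun a => ∫ x in a..(-1), deriv u x) atBot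
      (𝓝 (∫ x in Iic (-1), deriv u x)) :=
    intervalIntegral_tendsto_integral_Iic (-1) hu'int' tendsto_id
  have htendu : Tendsto u atBot (𝓝 (u (-1) - ∫ x in Iic (-1), deriv u x)) := by
    have h2 : Tendsto (fun a => u (-1) - ∫ x in a..(-1), deriv u x) atBot
        (𝓝 (u (-1) - ∫ x in Iic (-1), deriv u x)) := tendsto_const_nhds.sub htendI
    refine h2.congr' ?_
    filter_upwards [eventually_le_atBot (-1 : ℝ)] with a ha
    exact (hFTC a ha).symm
  have hzero : u (-1) - ∫ x in Iic (-1), deriv u x = 0 :=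
    limit_zero_of_integrable hucont (fun x => sq_nonneg _) hu htendu
  rw [hzero] at htendu
  -- conclude φ → 1
  have habs : Tendsto (fun ζ => |φ ζ - 1|) atBot (𝓝 0) := by
    have h0 : Tendsto Real.sqrt (𝓝 0) (𝓝 0) := by
      simpa using (Real.continuous_sqrt.tendsto 0)
    refine (h0.comp htendu).congr fun ζ => ?_
    simp [Function.comp, hu_def, Real.sqrt_sq_eq_abs]
  rw [tendsto_iff_norm_sub_tendsto_zero]
  simpa [Real.norm_eq_abs] using habs



lemma pair_le (n : ℝ) (hn : 1 < n) (ρ : ℝ → ℝ) (hρpos : ∀ ζ, 0 < ρ ζ)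
    (hρd : ∀ ζ, HasDerivAt ρ ((Real.exp (2*ζ)/2 - (n+3)/(n-1)) * ρ ζ) ζ)
    (φ₁ φ₂ : ℝ → ℝ) (h₁reg : ContDiff ℝ 2 φ₁) (h₂reg : ContDiff ℝ 2 φ₂)
    (h₁ode : ∀ ζ : ℝ, deriv (deriv φ₁) ζ +
      (Real.exp (2 * ζ) / 2 - (n + 3) / (n - 1)) * deriv φ₁ ζ +
      2 * (n + 1) / (n - 1) ^ 2 * φ₁ ζ * (1 - φ₁ ζ ^ (n - 1)) = 0)
    (h₂ode : ∀ ζ : ℝ, deriv (deriv φ₂) ζ +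
      (Real.exp (2 * ζ) / 2 - (n + 3) / (n - 1)) * deriv φ₂ ζ +
      2 * (n + 1) / (n - 1) ^ 2 * φ₂ ζ * (1 - φ₂ ζ ^ (n - 1)) = 0)
    (h₁range : ∀ ζ, 0 < φ₁ ζ ∧ φ₁ ζ < 1) (h₂range : ∀ ζ, 0 < φ₂ ζ ∧ φ₂ ζ < 1)
    (M : ℝ) (hM : ∀ ζ, φ₁ ζ / φ₂ ζ ≤ M)
    (t₁ : Tendsto φ₁ atBot (𝓝 1)) (t₂ : Tendsto φ₂ atBot (𝓝 1))
    (hfint : IntegrableOn (fun ζ => ρ ζ * φ₂ ζ ^ 2) (Ioi 1)) :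
    ∀ ζ, φ₁ ζ ≤ φ₂ ζ := by
  have hn1 : (0:ℝ) < n - 1 := by linarith
  set c : ℝ := 2 * (n + 1) / (n - 1) ^ 2 with hc_def
  have hc : 0 < c := by positivity
  -- differentiability facts
  have h₁d : Differentiable ℝ φ₁ := h₁reg.differentiable (by norm_num)
  have h₂d : Differentiable ℝ φ₂ := h₂reg.differentiable (by norm_num)
  have h₁d' : Differentiable ℝ (deriv φ₁) := by
    have := (contDiff_succ_iff_deriv (n := 1)).mp h₁reg
    exact this.2.2.differentiable one_ne_zero
  have h₂d' : Differentiable ℝ (deriv φ₂) := by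
    have := (contDiff_succ_iff_deriv (n := 1)).mp h₂reg
    exact this.2.2.differentiable one_ne_zero
  have hρdiff : Differentiable ℝ ρ := fun ζ => (hρd ζ).differentiableAt
  have hρc : Continuous ρ := hρdiff.continuous
  have h₁c : Continuous φ₁ := h₁d.continuous
  have h₂c : Continuous φ₂ := h₂d.continuous
  have h₁'c : Continuous (deriv φ₁) := h₁d'.continuous
  have h₂'c : Continuous (deriv φ₂) := h₂d'.continuous
  -- the Wronskian-type function h
  set H : ℝ → ℝ := fun ζ => ρ ζ * (deriv φ₁ ζ * φ₂ ζ - deriv φ₂ ζ * φ₁ ζ) with hH_def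
  have hHc : Continuous H := by rw [hH_def]; fun_prop
  have hHd : ∀ ζ, HasDerivAt H
      (c * ρ ζ * (φ₁ ζ * φ₂ ζ) * (φ₁ ζ ^ (n-1) - φ₂ ζ ^ (n-1))) ζ := by
    intro ζ
    have e₁ : deriv (deriv φ₁) ζ =
        -((Real.exp (2 * ζ) / 2 - (n + 3) / (n - 1)) * deriv φ₁ ζ)
        - c * φ₁ ζ * (1 - φ₁ ζ ^ (n - 1)) := by have := h₁ode ζ; linarith
    have e₂ : deriv (deriv φ₂) ζ =
        -((Real.exp (2 * ζ) / 2 - (n + 3) / (n - 1)) * deriv φ₂ ζ)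
        - c * φ₂ ζ * (1 - φ₂ ζ ^ (n - 1)) := by have := h₂ode ζ; linarith
    have H1 : HasDerivAt (fun z => deriv φ₁ z * φ₂ z - deriv φ₂ z * φ₁ z)
        ((deriv (deriv φ₁) ζ * φ₂ ζ + deriv φ₁ ζ * deriv φ₂ ζ)
          - (deriv (deriv φ₂) ζ * φ₁ ζ + deriv φ₂ ζ * deriv φ₁ ζ)) ζ := by
      exact (((h₁d' ζ).hasDerivAt.mul (h₂d ζ).hasDerivAt).sub
        ((h₂d' ζ).hasDerivAt.mul (h₁d ζ).hasDerivAt))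
    have H2 := (hρd ζ).fun_mul H1
    refine H2.congr_deriv ?_
    rw [e₁, e₂]; ring
  -- the ratio q
  set q : ℝ → ℝ := fun ζ => φ₁ ζ / φ₂ ζ with hq_def
  have hqd : ∀ ζ, HasDerivAt q (H ζ / (ρ ζ * φ₂ ζ ^ 2)) ζ := by
    intro ζ
    have := (h₁d ζ).hasDerivAt.fun_div (h₂d ζ).hasDerivAt (ne_of_gt (h₂range ζ).1)
    refine this.congr_deriv ?_
    have hρ0 : ρ ζ ≠ 0 := ne_of_gt (hρpos ζ)
    have hφ0 : φ₂ ζ ≠ 0 := ne_of_gt (h₂range ζ).1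
    rw [hH_def]
    field_simp
  have hq'c : Continuous (deriv q) := by
    have : deriv q = fun ζ => H ζ / (ρ ζ * φ₂ ζ ^ 2) := funext fun ζ => (hqd ζ).deriv
    rw [this]
    exact hHc.div (by fun_prop) (fun ζ => ne_of_gt (mul_pos (hρpos ζ) (pow_pos (h₂range ζ).1 2)))
  have hqpos : ∀ ζ, 0 < q ζ := fun ζ => div_pos (h₁range ζ).1 (h₂range ζ).1
  have hqc : Continuous q := by
    rw [hq_def]; exact h₁c.div h₂c (fun ζ => ne_of_gt (h₂range ζ).1)
  -- main claim: no point with φ₂ < φ₁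
  intro ζ₀
  by_contra hlt
  push_neg at hlt
  set x₀ := ζ₀
  have hw0 : 0 < φ₁ x₀ - φ₂ x₀ := by linarith
  have hq0 : 1 < q x₀ := (one_lt_div (h₂range x₀).1).mpr (by linarith)
  -- sign of H' where φ₁ > φ₂
  have hH'pos : ∀ ζ, φ₂ ζ < φ₁ ζ →
      0 < c * ρ ζ * (φ₁ ζ * φ₂ ζ) * (φ₁ ζ ^ (n-1) - φ₂ ζ ^ (n-1)) := by
    intro ζ hζ
    have h1 : φ₂ ζ ^ (n-1) < φ₁ ζ ^ (n-1) :=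
      Real.rpow_lt_rpow (le_of_lt (h₂range ζ).1) hζ hn1
    exact mul_pos (mul_pos (mul_pos hc (hρpos ζ))
      (mul_pos (h₁range ζ).1 (h₂range ζ).1)) (sub_pos.mpr h1)
  have hq'eq : ∀ ζ, deriv q ζ = H ζ / (ρ ζ * φ₂ ζ ^ 2) := fun ζ => (hqd ζ).deriv
  have hfpos : ∀ ζ, 0 < ρ ζ * φ₂ ζ ^ 2 := fun ζ => mul_pos (hρpos ζ) (pow_pos (h₂range ζ).1 2)
  rcases le_or_gt 0 (H x₀) with hH0 | hH0
  · -- Case A : H x₀ ≥ 0, trouble propagates to +∞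
    -- Step A1 : φ₂ < φ₁ on [x₀, ∞)
    have hA1 : ∀ ζ, x₀ ≤ ζ → φ₂ ζ < φ₁ ζ := by
      by_contra hcon
      push_neg at hcon
      obtain ⟨b₀, hb₀1, hb₀2⟩ := hcon
      set B : Set ℝ := Ici x₀ ∩ {ζ | φ₁ ζ ≤ φ₂ ζ} with hB_def
      have hBc : IsClosed B := isClosed_Ici.inter (isClosed_le h₁c h₂c)
      have hBne : B.Nonempty := ⟨b₀, hb₀1, hb₀2⟩
      have hBbdd : BddBelow B := ⟨x₀, fun x hx => hx.1⟩
      set b := sInf B with hb_def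
      have hbB : b ∈ B := hBc.csInf_mem hBne hBbdd
      have hx₀b : x₀ < b := by
        rcases lt_or_eq_of_le (mem_Ici.mp hbB.1) with h | h
        · exact h
        · exfalso; have := hbB.2; rw [← h] at this; exact absurd this (not_le.mpr hlt)
      have hmid : ∀ ζ ∈ Ico x₀ b, φ₂ ζ < φ₁ ζ := by
        intro ζ hζ
        by_contra hc2
        push_neg at hc2
        exact absurd (csInf_le hBbdd ⟨hζ.1, hc2⟩) (not_le.mpr hζ.2)
      have hHmono : StrictMonoOn H (Icc x₀ b) := by
        apply strictMonoOn_of_deriv_pos (convex_Icc x₀ b) (hHc.continuousOn)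
        intro ζ hζ
        rw [interior_Icc] at hζ
        rw [(hHd ζ).deriv]
        exact hH'pos ζ (hmid ζ ⟨le_of_lt hζ.1, hζ.2⟩)
      have hHposOn : ∀ ζ ∈ Ioc x₀ b, 0 < H ζ := by
        intro ζ hζ
        have := hHmono (left_mem_Icc.mpr (le_of_lt hx₀b)) ⟨le_of_lt hζ.1, hζ.2⟩ hζ.1
        linarith
      have hqmono : StrictMonoOn q (Icc x₀ b) := by
        apply strictMonoOn_of_deriv_pos (convex_Icc x₀ b) (hqc.continuousOn)
        intro ζ hζ
        rw [interior_Icc] at hζ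
        rw [hq'eq ζ]
        exact div_pos (hHposOn ζ ⟨hζ.1, le_of_lt hζ.2⟩) (hfpos ζ)
      have hqb : 1 < q b := lt_trans hq0
        (hqmono (left_mem_Icc.mpr (le_of_lt hx₀b)) (right_mem_Icc.mpr (le_of_lt hx₀b)) hx₀b)
      have : φ₂ b < φ₁ b := (one_lt_div (h₂range b).1).mp hqb
      exact absurd hbB.2 (not_le.mpr this)
    -- Step A2 : H is strictly increasing on [x₀, ∞); get a positive lower bound δ
    have hHmono : StrictMonoOn H (Ici x₀) := by
      apply strictMonoOn_of_deriv_pos (convex_Ici x₀) (hHc.continuousOn)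
      intro ζ hζ
      rw [interior_Ici] at hζ
      rw [(hHd ζ).deriv]
      exact hH'pos ζ (hA1 ζ (le_of_lt hζ))
    obtain ⟨δ, hδ, hHge⟩ : ∃ δ : ℝ, 0 < δ ∧ ∀ ζ, x₀ + 1 ≤ ζ → δ ≤ H ζ := by
      refine ⟨H (x₀ + 1), lt_of_le_of_lt hH0
        (hHmono self_mem_Ici (by simp : x₀ + 1 ∈ Ici x₀) (by linarith)), ?_⟩
      intro ζ hζ
      exact hHmono.monotoneOn (by simp : x₀ + 1 ∈ Ici x₀)
        (mem_Ici.mpr (by linarith)) hζ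
    -- Step A3 : integral estimate forces q to exceed M
    obtain ⟨a, ha1, ha2⟩ : ∃ a : ℝ, x₀ + 1 ≤ a ∧ (2:ℝ) ≤ a :=
      ⟨max (x₀ + 1) 2, le_max_left _ _, le_max_right _ _⟩
    obtain ⟨C, hC0, hCint⟩ : ∃ C : ℝ, 0 ≤ C ∧
        ∀ T, a ≤ T → ∫ ζ in a..T, ρ ζ * φ₂ ζ ^ 2 ≤ C := by
      refine ⟨∫ ζ in Ioi (1:ℝ), ρ ζ * φ₂ ζ ^ 2,
        setIntegral_nonneg measurableSet_Ioi (fun ζ _ => le_of_lt (hfpos ζ)), ?_⟩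
      intro T hT
      rw [intervalIntegral.integral_of_le hT]
      apply setIntegral_mono_set hfint
      · filter_upwards [ae_restrict_mem measurableSet_Ioi] with x hx
        exact le_of_lt (hfpos x)
      · apply HasSubset.Subset.eventuallyLE
        intro x hx
        have := hx.1
        simp only [mem_Ioi]
        linarith
    obtain ⟨β, hβ⟩ : ∃ β : ℝ, 0 < β := ⟨C + 1, by linarith⟩
    have hMbig : 1 < M := lt_of_lt_of_le hq0 (hM x₀)
    have hkey : ∀ T, a ≤ T → δ / β ^ 2 * (2 * β * (T - a) - C) ≤ q T - q a := by
      intro T hT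
      have hfc : Continuous (fun ζ => ρ ζ * φ₂ ζ ^ 2) := by fun_prop
      have hint1 : IntervalIntegrable (deriv q) volume a T := hq'c.intervalIntegrable a T
      have hgc : Continuous (fun ζ => δ / β ^ 2 * (2 * β - ρ ζ * φ₂ ζ ^ 2)) := by fun_prop
      have hint2 : IntervalIntegrable (fun ζ => δ / β ^ 2 * (2 * β - ρ ζ * φ₂ ζ ^ 2)) volume a T :=
        hgc.intervalIntegrable a T
      have hFTC : ∫ ζ in a..T, deriv q ζ = q T - q a :=
        intervalIntegral.integral_deriv_eq_sub (fun ζ _ => (hqd ζ).differentiableAt) hint1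
      have hptwise : ∀ ζ ∈ Icc a T, δ / β ^ 2 * (2 * β - ρ ζ * φ₂ ζ ^ 2) ≤ deriv q ζ := by
        intro ζ hζ
        have hζa : x₀ + 1 ≤ ζ := le_trans ha1 hζ.1
        have h1 : δ ≤ H ζ := hHge ζ hζa
        have hf := hfpos ζ
        rw [hq'eq ζ]
        rw [div_mul_eq_mul_div, div_le_div_iff₀ (by positivity) hf]
        nlinarith [sq_nonneg (β - ρ ζ * φ₂ ζ ^ 2), mul_pos hδ hf, sq_nonneg β]
      have hmono := intervalIntegral.integral_mono_on hT hint2 hint1 hptwise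
      rw [hFTC] at hmono
      refine le_trans ?_ hmono
      have hsplit : ∫ ζ in a..T, δ / β ^ 2 * (2 * β - ρ ζ * φ₂ ζ ^ 2)
          = δ / β ^ 2 * (2 * β * (T - a) - ∫ ζ in a..T, ρ ζ * φ₂ ζ ^ 2) := by
        rw [intervalIntegral.integral_const_mul]
        congr 1
        rw [intervalIntegral.integral_sub intervalIntegrable_const (hfc.intervalIntegrable a T),
          intervalIntegral.integral_const, smul_eq_mul]
        ring
      rw [hsplit]
      have h3 : 0 < δ / β ^ 2 := by positivity
      have h4 := hCint T hT
      nlinarith [h4]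
    -- choose T large enough
    set T := a + ((M + 1) * β ^ 2 / δ + C) / (2 * β) with hT_def
    have hM1 : (0:ℝ) < M + 1 := by linarith
    have hTa : a ≤ T := by
      have h1 : 0 ≤ ((M + 1) * β ^ 2 / δ + C) / (2 * β) := by positivity
      rw [hT_def]
      linarith
    have hcomp : δ / β ^ 2 * (2 * β * (T - a) - C) = M + 1 := by
      rw [hT_def]
      have hβ0 : β ≠ 0 := ne_of_gt hβ
      have hδ0 : δ ≠ 0 := ne_of_gt hδ
      field_simp
      ring
    have hk := hkey T hTa
    rw [hcomp] at hk
    have hqT : q T ≤ M := hM T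
    have hqa : 0 < q a := hqpos a
    linarith
  · -- Case B : H x₀ < 0, trouble propagates to -∞
    -- Step B1 : φ₂ < φ₁ on (-∞, x₀]
    have hB1 : ∀ ζ, ζ ≤ x₀ → φ₂ ζ < φ₁ ζ := by
      by_contra hcon
      push_neg at hcon
      obtain ⟨b₀, hb₀1, hb₀2⟩ := hcon
      set B : Set ℝ := Iic x₀ ∩ {ζ | φ₁ ζ ≤ φ₂ ζ} with hB_def
      have hBc : IsClosed B := isClosed_Iic.inter (isClosed_le h₁c h₂c)
      have hBne : B.Nonempty := ⟨b₀, hb₀1, hb₀2⟩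
      have hBbdd : BddAbove B := ⟨x₀, fun x hx => hx.1⟩
      set b := sSup B with hb_def
      have hbB : b ∈ B := hBc.csSup_mem hBne hBbdd
      have hbx₀ : b < x₀ := by
        rcases lt_or_eq_of_le (mem_Iic.mp hbB.1) with h | h
        · exact h
        · exfalso; have := hbB.2; rw [h] at this; exact absurd this (not_le.mpr hlt)
      have hmid : ∀ ζ ∈ Ioc b x₀, φ₂ ζ < φ₁ ζ := by
        intro ζ hζ
        by_contra hc2
        push_neg at hc2
        exact absurd (le_csSup hBbdd ⟨hζ.2, hc2⟩) (not_le.mpr hζ.1)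
      have hHmono : StrictMonoOn H (Icc b x₀) := by
        apply strictMonoOn_of_deriv_pos (convex_Icc b x₀) (hHc.continuousOn)
        intro ζ hζ
        rw [interior_Icc] at hζ
        rw [(hHd ζ).deriv]
        exact hH'pos ζ (hmid ζ ⟨hζ.1, le_of_lt hζ.2⟩)
      have hHnegOn : ∀ ζ ∈ Ico b x₀, H ζ < 0 := by
        intro ζ hζ
        have := hHmono ⟨hζ.1, le_of_lt hζ.2⟩ (right_mem_Icc.mpr (le_of_lt hbx₀)) hζ.2
        linarith
      have hqanti : StrictAntiOn q (Icc b x₀) := by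
        apply strictAntiOn_of_deriv_neg (convex_Icc b x₀) (hqc.continuousOn)
        intro ζ hζ
        rw [interior_Icc] at hζ
        rw [hq'eq ζ]
        exact div_neg_of_neg_of_pos (hHnegOn ζ ⟨le_of_lt hζ.1, hζ.2⟩) (hfpos ζ)
      have hqb : 1 < q b := lt_trans hq0
        (hqanti (left_mem_Icc.mpr (le_of_lt hbx₀)) (right_mem_Icc.mpr (le_of_lt hbx₀)) hbx₀)
      have : φ₂ b < φ₁ b := (one_lt_div (h₂range b).1).mp hqb
      exact absurd hbB.2 (not_le.mpr this)
    -- Step B2 : q is strictly decreasing on (-∞, x₀]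
    have hHmono : StrictMonoOn H (Iic x₀) := by
      apply strictMonoOn_of_deriv_pos (convex_Iic x₀) (hHc.continuousOn)
      intro ζ hζ
      rw [interior_Iic] at hζ
      rw [(hHd ζ).deriv]
      exact hH'pos ζ (hB1 ζ (le_of_lt hζ))
    have hqanti : StrictAntiOn q (Iic x₀) := by
      apply strictAntiOn_of_deriv_neg (convex_Iic x₀) (hqc.continuousOn)
      intro ζ hζ
      rw [interior_Iic] at hζ
      rw [hq'eq ζ]
      refine div_neg_of_neg_of_pos ?_ (hfpos ζ)
      have := hHmono (mem_Iic.mpr (le_of_lt hζ)) (self_mem_Iic) hζ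
      linarith
    -- Step B3 : but q → 1 at -∞, contradiction
    have hqlim : Tendsto q atBot (𝓝 1) := by
      have := t₁.div t₂ one_ne_zero
      simpa [hq_def, Pi.div_def] using this
    have hev : ∀ᶠ ζ in atBot, q ζ < q x₀ := hqlim.eventually (eventually_lt_nhds hq0)
    obtain ⟨A, hA⟩ := eventually_atBot.mp hev
    set ζ₁ := min A (x₀ - 1) with hζ₁_def
    have h1 : q ζ₁ < q x₀ := hA ζ₁ (min_le_left _ _)
    have h2 : ζ₁ < x₀ := lt_of_le_of_lt (min_le_right _ _) (by linarith)
    have h3 : q x₀ < q ζ₁ := hqanti (mem_Iic.mpr (le_of_lt h2)) self_mem_Iic h2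
    linarith


/-- Uniqueness of the self-similar profile: two classical solutions of the profile
equation in the logarithmic variable, both with values in `(0,1)`, with `φᵢ - η` in the
weighted `H¹` space and with comparable values (`m ≤ φ₁/φ₂ ≤ M`), must coincide. -/
theorem profile_uniqueness (n : ℝ) (hn : 1 < n)
    (η : ℝ → ℝ) (hη_smooth : ContDiff ℝ (⊤ : ℕ∞) η)
    (hη_range : ∀ ζ, 0 ≤ η ζ ∧ η ζ ≤ 1)
    (hη_one : ∀ ζ ≤ (0:ℝ), η ζ = 1) (hη_zero : ∀ ζ ≥ (1:ℝ), η ζ = 0)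
    (ρ : ℝ → ℝ)
    (hρ : ρ = fun ζ : ℝ =>
      Real.exp (Real.exp (2 * ζ) / 4 - (n + 3) / (n - 1) * ζ))
    (φ₁ φ₂ : ℝ → ℝ)
    (h₁reg : ContDiff ℝ 2 φ₁) (h₂reg : ContDiff ℝ 2 φ₂)
    (h₁ode : ∀ ζ : ℝ, deriv (deriv φ₁) ζ +
      (Real.exp (2 * ζ) / 2 - (n + 3) / (n - 1)) * deriv φ₁ ζ +
      2 * (n + 1) / (n - 1) ^ 2 * φ₁ ζ * (1 - φ₁ ζ ^ (n - 1)) = 0)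
    (h₂ode : ∀ ζ : ℝ, deriv (deriv φ₂) ζ +
      (Real.exp (2 * ζ) / 2 - (n + 3) / (n - 1)) * deriv φ₂ ζ +
      2 * (n + 1) / (n - 1) ^ 2 * φ₂ ζ * (1 - φ₂ ζ ^ (n - 1)) = 0)
    (h₁range : ∀ ζ, 0 < φ₁ ζ ∧ φ₁ ζ < 1) (h₂range : ∀ ζ, 0 < φ₂ ζ ∧ φ₂ ζ < 1)
    (h₁mem : Integrable (fun ζ =>
      ((φ₁ ζ - η ζ) ^ 2 + (deriv φ₁ ζ - deriv η ζ) ^ 2) * ρ ζ))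
    (h₂mem : Integrable (fun ζ =>
      ((φ₂ ζ - η ζ) ^ 2 + (deriv φ₂ ζ - deriv η ζ) ^ 2) * ρ ζ))
    (m M : ℝ) (hm : 0 < m) (hmM : m ≤ M)
    (hratio : ∀ ζ : ℝ, m ≤ φ₁ ζ / φ₂ ζ ∧ φ₁ ζ / φ₂ ζ ≤ M) :
    φ₁ = φ₂ := by
  have hn1 : (0:ℝ) < n - 1 := by linarith
  have hk : (0:ℝ) < (n + 3) / (n - 1) := by positivity
  -- positivity and derivative of the weight
  have hρpos : ∀ ζ, 0 < ρ ζ := by intro ζ; rw [hρ]; exact Real.exp_pos _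
  have hρd : ∀ ζ, HasDerivAt ρ ((Real.exp (2*ζ)/2 - (n+3)/(n-1)) * ρ ζ) ζ := by
    intro ζ
    have h2ζ : HasDerivAt (fun z : ℝ => 2 * z) 2 ζ := by
      simpa using (hasDerivAt_id ζ).const_mul 2
    have hexp : HasDerivAt (fun z : ℝ => Real.exp (2 * z)) (Real.exp (2 * ζ) * 2) ζ := h2ζ.exp
    have hlin : HasDerivAt (fun z : ℝ => (n + 3) / (n - 1) * z) ((n + 3) / (n - 1)) ζ := by
      simpa using (hasDerivAt_id ζ).const_mul ((n + 3) / (n - 1))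
    have hg : HasDerivAt (fun z : ℝ => Real.exp (2 * z) / 4 - (n + 3) / (n - 1) * z)
        (Real.exp (2 * ζ) * 2 / 4 - (n + 3) / (n - 1)) ζ := (hexp.div_const 4).sub hlin
    have := hg.exp
    rw [hρ]
    convert this using 1
    ring
  -- η is locally constant near -∞
  have hηd0 : ∀ ζ < (0:ℝ), deriv η ζ = 0 := by
    intro ζ hζ
    have hev : η =ᶠ[nhds ζ] (fun _ => (1:ℝ)) :=
      Filter.eventually_of_mem (Iio_mem_nhds hζ) (fun x hx => hη_one x (le_of_lt hx))
    rw [hev.deriv_eq]; simp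
  have hρge1 : ∀ ζ ≤ (0:ℝ), 1 ≤ ρ ζ := by
    intro ζ hζ
    rw [hρ]
    apply Real.one_le_exp
    have h1 : 0 < Real.exp (2 * ζ) / 4 := by positivity
    nlinarith [mul_nonpos_of_nonneg_of_nonpos (le_of_lt hk) hζ]
  -- facts for a single solution
  have key : ∀ φ : ℝ → ℝ, ContDiff ℝ 2 φ → (∀ ζ, 0 < φ ζ ∧ φ ζ < 1) →
      Integrable (fun ζ => ((φ ζ - η ζ) ^ 2 + (deriv φ ζ - deriv η ζ) ^ 2) * ρ ζ) →
      Tendsto φ atBot (𝓝 1) ∧ IntegrableOn (fun ζ => ρ ζ * φ ζ ^ 2) (Ioi 1) := by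
    intro φ hreg hrange hmem
    have hd : Differentiable ℝ φ := hreg.differentiable (by norm_num)
    have hd' : Differentiable ℝ (deriv φ) := by
      have := (contDiff_succ_iff_deriv (n := 1)).mp hreg
      exact this.2.2.differentiable one_ne_zero
    have hc : Continuous φ := hd.continuous
    have h'c : Continuous (deriv φ) := hd'.continuous
    have hηc : Continuous η := hη_smooth.continuous
    have hηd : Differentiable ℝ η := hη_smooth.differentiable (by simp)
    have hη'c : Continuous (deriv η) := hη_smooth.continuous_deriv (by simp)
    have hρc : Continuous ρ := by rw [hρ]; fun_prop
    constructor
    · -- tendsto at -∞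
      have hbound : ∀ ζ < (0:ℝ),
          (φ ζ - 1) ^ 2 ≤ ((φ ζ - η ζ) ^ 2 + (deriv φ ζ - deriv η ζ) ^ 2) * ρ ζ ∧
          (deriv φ ζ) ^ 2 ≤ ((φ ζ - η ζ) ^ 2 + (deriv φ ζ - deriv η ζ) ^ 2) * ρ ζ := by
        intro ζ hζ
        have h1 : η ζ = 1 := hη_one ζ (le_of_lt hζ)
        have h2 : deriv η ζ = 0 := hηd0 ζ hζ
        have h3 : 1 ≤ ρ ζ := hρge1 ζ (le_of_lt hζ)
        rw [h1, h2]
        constructor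
        · nlinarith [sq_nonneg (φ ζ - 1), sq_nonneg (deriv φ ζ)]
        · nlinarith [sq_nonneg (φ ζ - 1), sq_nonneg (deriv φ ζ)]
      have hu : IntegrableOn (fun ζ => (φ ζ - 1)^2) (Iio 0) := by
        refine Integrable.mono' (hmem.integrableOn) ?_ ?_
        · exact (Continuous.aestronglyMeasurable (by fun_prop))
        · rw [ae_restrict_iff' measurableSet_Iio]
          filter_upwards with ζ hζ
          rw [Real.norm_of_nonneg (sq_nonneg _)]
          exact (hbound ζ hζ).1
      have hv : IntegrableOn (fun ζ => (deriv φ ζ)^2) (Iio 0) := by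
        refine Integrable.mono' (hmem.integrableOn) ?_ ?_
        · exact (Continuous.aestronglyMeasurable (by fun_prop))
        · rw [ae_restrict_iff' measurableSet_Iio]
          filter_upwards with ζ hζ
          rw [Real.norm_of_nonneg (sq_nonneg _)]
          exact (hbound ζ hζ).2
      exact tendsto_one_atBot hd h'c hu hv
    · -- integrability at +∞
      refine Integrable.mono' (hmem.integrableOn) ?_ ?_
      · exact (Continuous.aestronglyMeasurable (by fun_prop))
      · rw [ae_restrict_iff' measurableSet_Ioi]
        filter_upwards with ζ hζ
        have h0 : η ζ = 0 := hη_zero ζ (le_of_lt hζ)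
        have hρ0 := hρpos ζ
        rw [Real.norm_of_nonneg (mul_nonneg (le_of_lt hρ0) (sq_nonneg _)), h0]
        nlinarith [sq_nonneg (deriv φ ζ - deriv η ζ), sq_nonneg (φ ζ)]
  obtain ⟨t₁, hint₁⟩ := key φ₁ h₁reg h₁range h₁mem
  obtain ⟨t₂, hint₂⟩ := key φ₂ h₂reg h₂range h₂mem
  -- two applications of pair_le
  have hle₁ : ∀ ζ, φ₁ ζ ≤ φ₂ ζ :=
    pair_le n hn ρ hρpos hρd φ₁ φ₂ h₁reg h₂reg h₁ode h₂ode h₁range h₂range M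
      (fun ζ => (hratio ζ).2) t₁ t₂ hint₂
  have hle₂ : ∀ ζ, φ₂ ζ ≤ φ₁ ζ := by
    refine pair_le n hn ρ hρpos hρd φ₂ φ₁ h₂reg h₁reg h₂ode h₁ode h₂range h₁range
      (1/m) (fun ζ => ?_) t₂ t₁ hint₁
    have h1 := (hratio ζ).1
    have h2 := (h₁range ζ).1
    have h3 := (h₂range ζ).1
    rw [div_le_div_iff₀ h2 hm]
    rw [le_div_iff₀ h3] at h1
    linarith
  funext ζ
  exact le_antisymm (hle₁ ζ) (hle₂ ζ)
end

section
/- Let n > 1 and let φ : (0,∞) → (0,1) be C¹ and strictly decreasing with lim_{ξ→0+} φ(ξ) = 1, lim_{ξ→∞} φ(ξ) = 0, 1 − φ(ξ) ≤ C ξ^{2(n+1)/(n−1)} on (0,1], and ξ² φ(ξ) → 0 as ξ → ∞. Then for every x > 0 the local accumulation time of the self-similar solution u(x,t) = v_∞(x) φ(x/√t) satisfies τ^∞(x) := ∫_0^∞ t · (∂/∂t) [ φ(x/√t) ] dt = a x², where a = 2 ∫_0^∞ ξ^{−3} ( 1 − φ(ξ) ) dξ is finite. -/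
/-!
Write `w = 1 - φ`. Substituting `η = x / √t` turns `τ^∞(x)` into `x² ∫_0^∞ w'(η) / η² dη`.
Since `(w / η²)' = w' / η² - 2 w / η³` and `w / η²` vanishes at both ends of `(0, ∞)`
(near `0` because `w(η) ≤ C η^p` with `p = 2(n+1)/(n-1) > 2`, near `∞` because `w ≤ 1`),
this equals `2 x² ∫_0^∞ w / η³`. Monotonicity of `φ` makes `w' ≥ 0`, which is what lets the
improper integral of `w' / η²` be evaluated without knowing its integrability in advance.
-/

open Real Filter MeasureTheory Set Topology

section Deficit

variable {w w' : ℝ → ℝ} {C M p : ℝ}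

lemma integrableOn_Ioc_zero_one_div_cube (hw : ContinuousOn w (Ioi 0)) (hp : 2 < p)
    (hw0 : ∀ ξ ∈ Ioc (0:ℝ) 1, |w ξ| ≤ C * ξ ^ p) :
    IntegrableOn (fun ξ => w ξ / ξ ^ 3) (Ioc 0 1) := by
  have hdom : IntegrableOn (fun ξ : ℝ => C * ξ ^ (p - 3)) (Ioc 0 1) :=
    ((intervalIntegrable_iff_integrableOn_Ioc_of_le zero_le_one).mp
      (intervalIntegral.intervalIntegrable_rpow' (by linarith))).const_mul C
  have hcont : ContinuousOn (fun ξ => w ξ / ξ ^ 3) (Ioc 0 1) :=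
    (hw.mono Ioc_subset_Ioi_self).div (continuous_pow 3).continuousOn
      fun ξ hξ => pow_ne_zero 3 hξ.1.ne'
  refine hdom.mono' (hcont.aestronglyMeasurable measurableSet_Ioc) ?_
  filter_upwards [ae_restrict_mem measurableSet_Ioc] with ξ hξ
  rw [norm_div, norm_pow, Real.norm_eq_abs, Real.norm_eq_abs, abs_of_pos hξ.1, rpow_sub hξ.1,
    rpow_ofNat, ← mul_div_assoc]
  exact div_le_div_of_nonneg_right (hw0 ξ hξ) (pow_pos hξ.1 3).le

lemma integrableOn_Ioi_one_div_cube (hw : ContinuousOn w (Ioi 0))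
    (hw1 : ∀ ξ, 1 < ξ → |w ξ| ≤ M) :
    IntegrableOn (fun ξ => w ξ / ξ ^ 3) (Ioi 1) := by
  have hdom : IntegrableOn (fun ξ : ℝ => M * ξ ^ (-3 : ℝ)) (Ioi 1) :=
    (integrableOn_Ioi_rpow_of_lt (by norm_num) one_pos).const_mul M
  have hcont : ContinuousOn (fun ξ => w ξ / ξ ^ 3) (Ioi 1) :=
    (hw.mono (Ioi_subset_Ioi zero_le_one)).div (continuous_pow 3).continuousOn
      fun ξ hξ => pow_ne_zero 3 (zero_lt_one.trans hξ).ne'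
  refine hdom.mono' (hcont.aestronglyMeasurable measurableSet_Ioi) ?_
  filter_upwards [ae_restrict_mem measurableSet_Ioi] with ξ (hξ : 1 < ξ)
  have hξ0 : 0 < ξ := zero_lt_one.trans hξ
  rw [norm_div, norm_pow, Real.norm_eq_abs, Real.norm_eq_abs, abs_of_pos hξ0, rpow_neg hξ0.le,
    rpow_ofNat, ← div_eq_mul_inv]
  gcongr
  exact hw1 ξ hξ

lemma integrableOn_Ioi_zero_div_cube (hw : ContinuousOn w (Ioi 0)) (hp : 2 < p)
    (hw0 : ∀ ξ ∈ Ioc (0:ℝ) 1, |w ξ| ≤ C * ξ ^ p) (hw1 : ∀ ξ, 1 < ξ → |w ξ| ≤ M) :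
    IntegrableOn (fun ξ => w ξ / ξ ^ 3) (Ioi 0) := by
  rw [← Ioc_union_Ioi_eq_Ioi zero_le_one]
  exact (integrableOn_Ioc_zero_one_div_cube hw hp hw0).union
    (integrableOn_Ioi_one_div_cube hw hw1)

lemma tendsto_div_sq_nhdsGT_zero (hp : 2 < p) (hw0 : ∀ ξ ∈ Ioc (0:ℝ) 1, |w ξ| ≤ C * ξ ^ p) :
    Tendsto (fun ξ => w ξ / ξ ^ 2) (𝓝[>] 0) (𝓝 0) := by
  have hdom : Tendsto (fun ξ : ℝ => C * ξ ^ (p - 2)) (𝓝[>] 0) (𝓝 0) := by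
    have := (continuousAt_rpow_const 0 (p - 2) (Or.inr (by linarith))).tendsto.const_mul C
    simpa [zero_rpow (by linarith : p - 2 ≠ 0)] using this.mono_left nhdsWithin_le_nhds
  refine squeeze_zero_norm' ?_ hdom
  filter_upwards [Ioc_mem_nhdsGT zero_lt_one] with ξ hξ
  rw [norm_div, norm_pow, Real.norm_eq_abs, Real.norm_eq_abs, abs_of_pos hξ.1, rpow_sub hξ.1,
    rpow_ofNat, ← mul_div_assoc]
  gcongr
  exact hw0 ξ hξ

lemma tendsto_div_sq_atTop (hw1 : ∀ ξ, 1 < ξ → |w ξ| ≤ M) :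
    Tendsto (fun ξ => w ξ / ξ ^ 2) atTop (𝓝 0) := by
  have hdom : Tendsto (fun ξ : ℝ => M / ξ ^ 2) atTop (𝓝 0) := by
    simpa [div_eq_mul_inv] using (tendsto_pow_atTop two_ne_zero).inv_tendsto_atTop.const_mul M
  refine squeeze_zero_norm' ?_ hdom
  filter_upwards [eventually_gt_atTop 1] with ξ hξ
  rw [norm_div, norm_pow, Real.norm_eq_abs, Real.norm_eq_abs, abs_of_pos (zero_lt_one.trans hξ)]
  gcongr
  exact hw1 ξ hξ

theorem integral_Ioi_deriv_div_sq (hw : ∀ η ∈ Ioi (0:ℝ), HasDerivAt w (w' η) η)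
    (hw' : ∀ η ∈ Ioi (0:ℝ), 0 ≤ w' η) (hint : IntegrableOn (fun ξ => w ξ / ξ ^ 3) (Ioi 0))
    (h0 : Tendsto (fun ξ => w ξ / ξ ^ 2) (𝓝[>] 0) (𝓝 0))
    (hinf : Tendsto (fun ξ => w ξ / ξ ^ 2) atTop (𝓝 0)) :
    ∫ η in Ioi 0, w' η / η ^ 2 = 2 * ∫ ξ in Ioi 0, w ξ / ξ ^ 3 := by
  have hII : ∀ η, 0 ≤ η → IntervalIntegrable (fun ξ => w ξ / ξ ^ 3) volume 0 η := fun η hη =>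
    (intervalIntegrable_iff_integrableOn_Ioc_of_le hη).mpr (hint.mono_set Ioc_subset_Ioi_self)
  -- `G η = w η / η ^ 2 + 2 ∫_0^η w / ξ³` has derivative `w' / η² ≥ 0`,
  -- and `G 0 = 0` as `w 0 / 0 = 0`.
  have hG0 : ContinuousWithinAt
      (fun η => w η / η ^ 2 + 2 * ∫ ξ in (0:ℝ)..η, w ξ / ξ ^ 3) (Ici 0) 0 := by
    have hprim : ContinuousWithinAt (fun η => ∫ ξ in (0:ℝ)..η, w ξ / ξ ^ 3) (Ici 0) 0 :=
      (intervalIntegral.continuousWithinAt_primitive (b₁ := 0) (b₂ := 1) (measure_singleton 0)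
        (by simpa using hII 1 zero_le_one)).mono_of_mem_nhdsWithin (Icc_mem_nhdsGE zero_lt_one)
    have hquot : ContinuousWithinAt (fun η => w η / η ^ 2) (Ici 0) 0 := by
      rw [← continuousWithinAt_Ioi_iff_Ici, ContinuousWithinAt]
      simpa using h0
    exact hquot.add (hprim.const_mul 2)
  have hA : ∀ η ∈ Ioi (0:ℝ), ContinuousAt (fun ξ => w ξ / ξ ^ 3) η := fun η hη =>
    (hw η hη).continuousAt.div (continuousAt_id.pow 3) (pow_ne_zero 3 (ne_of_gt hη))
  have hG : ∀ η ∈ Ioi (0:ℝ), HasDerivAt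
      (fun η => w η / η ^ 2 + 2 * ∫ ξ in (0:ℝ)..η, w ξ / ξ ^ 3) (w' η / η ^ 2) η := by
    intro η (hη : 0 < η)
    have hprim : HasDerivAt (fun η => ∫ ξ in (0:ℝ)..η, w ξ / ξ ^ 3) (w η / η ^ 3) η :=
      intervalIntegral.integral_hasDerivAt_right (hII η hη.le)
        (ContinuousAt.stronglyMeasurableAtFilter isOpen_Ioi hA η hη) (hA η hη)
    refine (((hw η hη).div (hasDerivAt_pow 2 η) (pow_ne_zero 2 hη.ne')).add
      (hprim.const_mul 2)).congr_deriv ?_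
    field_simp
    ring
  have hGinf : Tendsto (fun η => w η / η ^ 2 + 2 * ∫ ξ in (0:ℝ)..η, w ξ / ξ ^ 3) atTop
      (𝓝 (2 * ∫ ξ in Ioi 0, w ξ / ξ ^ 3)) := by
    simpa using hinf.add ((intervalIntegral_tendsto_integral_Ioi 0 hint tendsto_id).const_mul 2)
  simpa using integral_Ioi_of_hasDerivAt_of_nonneg hG0 hG
    (fun η hη => div_nonneg (hw' η hη) (sq_nonneg η)) hGinf

end Deficit

section SelfSimilar

variable {x : ℝ}

lemma hasDerivAt_comp_div_sqrt {ψ : ℝ → ℝ} {ψ' t : ℝ} (hψ : HasDerivAt ψ ψ' (x / √t))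
    (ht : 0 < t) : HasDerivAt (fun s => ψ (x / √s)) (-(x / √t) * ψ' / (2 * t)) t := by
  have hsqrt : 0 < √t := sqrt_pos.mpr ht
  refine (hψ.comp t ((hasDerivAt_const t x).div (hasDerivAt_sqrt ht.ne') hsqrt.ne')).congr_deriv
    ?_
  field_simp
  rw [sq_sqrt ht.le]
  ring

lemma mul_deriv_comp_div_sqrt {ψ : ℝ → ℝ} {t : ℝ} (hψ : DifferentiableAt ℝ ψ (x / √t))
    (ht : 0 < t) : t * deriv (fun s => ψ (x / √s)) t = -(x / √t * deriv ψ (x / √t)) / 2 := by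
  rw [(hasDerivAt_comp_div_sqrt hψ.hasDerivAt ht).deriv]
  field_simp

lemma integral_Ioi_comp_div_sqrt (f : ℝ → ℝ) (hx : 0 < x) :
    ∫ t in Ioi 0, f (x / √t) = 2 * x ^ 2 * ∫ η in Ioi 0, f η / η ^ 3 := by
  rw [← integral_comp_rpow_Ioi _ (by norm_num : (-2:ℝ) ≠ 0)]
  have hpoint : ∀ ξ ∈ Ioi (0:ℝ), (|(-2:ℝ)| * ξ ^ ((-2:ℝ) - 1)) • f (x / √(ξ ^ (-2:ℝ))) =
      2 * x ^ 3 * (f (x * ξ) / (x * ξ) ^ 3) := by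
    intro ξ (hξ : 0 < ξ)
    rw [sqrt_eq_rpow, ← rpow_mul hξ.le, show (-2:ℝ) - 1 = -3 by norm_num,
      show (-2:ℝ) * (1 / 2) = -1 by norm_num, rpow_neg_one, rpow_neg hξ.le, rpow_ofNat,
      smul_eq_mul]
    field_simp
    norm_num
  rw [setIntegral_congr_fun measurableSet_Ioi hpoint, integral_comp_mul_left_Ioi
    (fun η => 2 * x ^ 3 * (f η / η ^ 3)) 0 hx, mul_zero, integral_const_mul, smul_eq_mul]
  field_simp

end SelfSimilar

theorem local_accumulation_time_general (n : ℝ) (hn : 1 < n)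
    (φ : ℝ → ℝ) (hreg : ContDiffOn ℝ 1 φ (Set.Ioi 0))
    (hrange : ∀ ξ > (0:ℝ), 0 < φ ξ ∧ φ ξ < 1)
    (hmono : StrictAntiOn φ (Set.Ioi 0))
    (C : ℝ)
    (hbound : ∀ ξ : ℝ, 0 < ξ → ξ ≤ 1 →
      1 - φ ξ ≤ C * ξ ^ (2 * (n + 1) / (n - 1))) :
    IntegrableOn (fun ξ => (1 - φ ξ) / ξ ^ 3) (Set.Ioi 0) ∧
    ∀ x > (0:ℝ),
      ∫ t in Set.Ioi (0:ℝ), t * deriv (fun s => φ (x / Real.sqrt s)) t =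
        (2 * ∫ ξ in Set.Ioi (0:ℝ), (1 - φ ξ) / ξ ^ 3) * x ^ 2 := by
  have hp : 2 < 2 * (n + 1) / (n - 1) := by rw [lt_div_iff₀ (by linarith)]; linarith
  have hφ : ∀ η ∈ Ioi (0:ℝ), HasDerivAt φ (deriv φ η) η := fun η hη =>
    ((hreg.differentiableOn one_ne_zero).differentiableAt (isOpen_Ioi.mem_nhds hη)).hasDerivAt
  have hφ' : ∀ η ∈ Ioi (0:ℝ), 0 ≤ -deriv φ η := fun η hη => by
    rw [neg_nonneg, ← derivWithin_of_isOpen isOpen_Ioi hη]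
    exact hmono.antitoneOn.derivWithin_nonpos
  have hw0 : ∀ ξ ∈ Ioc (0:ℝ) 1, |1 - φ ξ| ≤ C * ξ ^ (2 * (n + 1) / (n - 1)) := fun ξ hξ => by
    rw [abs_of_pos (sub_pos.mpr (hrange ξ hξ.1).2)]
    exact hbound ξ hξ.1 hξ.2
  have hw1 : ∀ ξ, 1 < ξ → |1 - φ ξ| ≤ 1 := fun ξ hξ => by
    have := hrange ξ (zero_lt_one.trans hξ)
    rw [abs_le]
    constructor <;> linarith
  have hint : IntegrableOn (fun ξ => (1 - φ ξ) / ξ ^ 3) (Ioi 0) :=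
    integrableOn_Ioi_zero_div_cube (continuousOn_const.sub hreg.continuousOn) hp hw0 hw1
  refine ⟨hint, fun x hx => ?_⟩
  have hkey := integral_Ioi_deriv_div_sq (fun η hη => (hφ η hη).const_sub 1) hφ' hint
    (tendsto_div_sq_nhdsGT_zero hp hw0) (tendsto_div_sq_atTop hw1)
  calc ∫ t in Ioi 0, t * deriv (fun s => φ (x / √s)) t
      = ∫ t in Ioi 0, (fun η => -(η * deriv φ η) / 2) (x / √t) :=
        setIntegral_congr_fun measurableSet_Ioi fun t ht =>
          mul_deriv_comp_div_sqrt (hφ _ (div_pos hx (sqrt_pos.mpr ht))).differentiableAt ht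
    _ = 2 * x ^ 2 * ∫ η in Ioi 0, -(η * deriv φ η) / 2 / η ^ 3 :=
        integral_Ioi_comp_div_sqrt (fun η => -(η * deriv φ η) / 2) hx
    _ = x ^ 2 * ∫ η in Ioi 0, -deriv φ η / η ^ 2 := by
        rw [mul_comm 2, mul_assoc, ← integral_const_mul]
        refine congrArg _ (setIntegral_congr_fun measurableSet_Ioi fun η (hη : 0 < η) => ?_)
        field_simp
    _ = _ := by rw [hkey]; ring

/-- The local accumulation time of the self-similar solution:
`τ^∞(x) = ∫_0^∞ t ∂_t[φ(x/√t)] dt = a x²` with `a = 2 ∫_0^∞ ξ^{-3}(1 - φ(ξ)) dξ`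
finite. -/
theorem local_accumulation_time (n : ℝ) (hn : 1 < n)
    (φ : ℝ → ℝ) (hreg : ContDiffOn ℝ 1 φ (Set.Ioi 0))
    (hrange : ∀ ξ > (0:ℝ), 0 < φ ξ ∧ φ ξ < 1)
    (hmono : StrictAntiOn φ (Set.Ioi 0))
    (hlim0 : Tendsto φ (nhdsWithin 0 (Set.Ioi 0)) (nhds 1))
    (hliminf : Tendsto φ atTop (nhds 0))
    (C : ℝ) (hC : 0 < C)
    (hbound : ∀ ξ : ℝ, 0 < ξ → ξ ≤ 1 →
      1 - φ ξ ≤ C * ξ ^ (2 * (n + 1) / (n - 1)))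
    (hdecay : Tendsto (fun ξ => ξ ^ 2 * φ ξ) atTop (nhds 0)) :
    IntegrableOn (fun ξ => (1 - φ ξ) / ξ ^ 3) (Set.Ioi 0) ∧
    ∀ x > (0:ℝ),
      ∫ t in Set.Ioi (0:ℝ), t * deriv (fun s => φ (x / Real.sqrt s)) t =
        (2 * ∫ ξ in Set.Ioi (0:ℝ), (1 - φ ξ) / ξ ^ 3) * x ^ 2 :=
  local_accumulation_time_general n hn φ hreg hrange hmono C hbound
end
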